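/- arXiv:math/0301084 — 7 statements merged into one kernel-verified Lean document; each statement's English description precedes it below -/
import Mathlib

section
/- For every n ≥ 1, the following identities hold in the polynomial ring F_2[x_1,…,x_{n+1}]: D_1(x_1,…,x_{n+1}) = ∏_{α ∈ V_n} (x_{n+1} + α) + D_1(x_1,…,x_n)², where V_n denotes the set of all F_2-linear combinations of x_1,…,x_n (a set of 2^n polynomials, including 0); and D_1(x_1,…,x_{n+1}) = x_{n+1}^{2^n} + Σ_{i=1}^{n} x_{n+1}^{2^{n−i}}·D_i(x_1,…,x_n) + D_1(x_1,…,x_n)². -/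
noncomputable section

open MvPolynomial

/-- The set of `𝔽₂`-linear combinations (i.e. subset sums) of the family `v`. -/
def spanF2 {R : Type*} [CommRing R] {n : ℕ} (v : Fin n → R) : Finset R :=
  letI := Classical.decEq R
  Finset.image (fun s : Finset (Fin n) => ∑ j ∈ s, v j) Finset.univ

/-- The Dickson invariant `D_i(v₁, …, vₙ)`: the `(2^n - 2^(n-i))`-th elementary symmetric
polynomial of the `2^n` elements of the `𝔽₂`-linear span of `v₁, …, vₙ`. -/
def dickson {R : Type*} [CommRing R] {n : ℕ} (v : Fin n → R) (i : ℕ) : R :=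
  (spanF2 v).val.esymm (2 ^ n - 2 ^ (n - i))

/-- The product `∏_{α ∈ span_{𝔽₂}(v)} (w + α)`. -/
def prodAdd {R : Type*} [CommRing R] {n : ℕ} (v : Fin n → R) (w : R) : R :=
  ∏ α ∈ spanF2 v, (w + α)

namespace Stmt6Aux
variable {R : Type*} [CommRing R]
def bS {n : ℕ} (v : Fin n → R) (c : Fin n → Bool) : R := ∑ j, if c j then v j else 0
def Q {n : ℕ} (v : Fin n → R) : Polynomial R :=
  ∏ c : Fin n → Bool, (Polynomial.X + Polynomial.C (bS v c))
def piF {n : ℕ} (v : Fin n → R) (w : R) : R := ∏ c : Fin n → Bool, (w + bS v c)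
lemma eval_Q {n : ℕ} (v : Fin n → R) (w : R) : (Q v).eval w = piF v w := by
  simp [Q, piF, Polynomial.eval_prod]
lemma bS_snoc {n : ℕ} (v : Fin (n+1) → R) (c : Fin n → Bool) (b : Bool) :
    bS v (Fin.snoc c b) = (if b then v (Fin.last n) else 0) + bS (v ∘ Fin.castSucc) c := by
  simp [bS, Fin.sum_univ_castSucc, add_comm]
lemma prod_split {M : Type*} [CommMonoid M] {n : ℕ} (g : (Fin (n+1) → Bool) → M) :
    ∏ c : Fin (n+1) → Bool, g c
      = (∏ c : Fin n → Bool, g (Fin.snoc c false)) * ∏ c : Fin n → Bool, g (Fin.snoc c true) := by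
  rw [← (Fin.snocEquiv (fun _ => Bool)).prod_comp g, Fintype.prod_prod_type, Fintype.prod_bool,
    mul_comm]
  rfl

lemma key (h2 : (2 : R) = 0) : ∀ {n : ℕ} (v : Fin n → R) (w : R),
    (∏ c : Fin n → Bool, (Polynomial.X + Polynomial.C (w + bS v c)))
      = Q v + Polynomial.C (piF v w) := by
  intro n
  induction n with
  | zero =>
    intro v w
    have hu : ∀ c : Fin 0 → Bool, bS v c = 0 := by intro c; simp [bS]
    simp [Q, piF, hu]
  | succ n ih =>
    intro v w
    have h2' : (2 : Polynomial R) = 0 := by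
      rw [← map_ofNat (Polynomial.C : R →+* Polynomial R) 2, h2, map_zero]
    have hXC : ∀ x y : R, x = y → Polynomial.X + Polynomial.C x = Polynomial.X + Polynomial.C y :=
      fun x y h => by rw [h]
    set v' : Fin n → R := v ∘ Fin.castSucc with hv'
    set a : R := v (Fin.last n) with ha
    -- additivity of piF
    have hadd : ∀ u w : R, piF v' (u + w) = piF v' u + piF v' w := by
      intro u w
      have := congrArg (Polynomial.eval u) (ih v' w)
      simpa [Polynomial.eval_prod, piF, eval_Q, add_assoc] using this
    have hsplit : ∀ w : R, (∏ c : Fin (n+1) → Bool, (Polynomial.X + Polynomial.C (w + bS v c)))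
        = (∏ c : Fin n → Bool, (Polynomial.X + Polynomial.C (w + bS v' c)))
          * (∏ c : Fin n → Bool, (Polynomial.X + Polynomial.C ((w + a) + bS v' c))) := by
      intro w
      rw [prod_split]
      congr 1
      · refine Finset.prod_congr rfl fun c _ => ?_
        rw [bS_snoc]; exact hXC _ _ (by simp [hv'])
      · refine Finset.prod_congr rfl fun c _ => ?_
        rw [bS_snoc]; exact hXC _ _ (by simp; ring)
    have hsplitP : ∀ w : R, piF v w = piF v' w * piF v' (w + a) := by
      intro w
      rw [piF, prod_split]
      congr 1
      · refine Finset.prod_congr rfl fun c _ => ?_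
        rw [bS_snoc]; simp [hv']
      · refine Finset.prod_congr rfl fun c _ => ?_
        rw [bS_snoc]; simp; ring
    have hQ : Q v = Q v' * (Q v' + Polynomial.C (piF v' a)) := by
      rw [Q, prod_split]
      congr 1
      · rw [Q]
        refine Finset.prod_congr rfl fun c _ => ?_
        rw [bS_snoc]; exact hXC _ _ (by simp [hv'])
      · rw [← ih v' a]
        refine Finset.prod_congr rfl fun c _ => ?_
        rw [bS_snoc]; exact hXC _ _ (by simp [hv', ha])
    rw [hsplit, ih v' w, ih v' (w + a), hQ, hsplitP, hadd w a]
    set q := Q v'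
    set p1 := piF v' w
    set p2 := piF v' a
    have : Polynomial.C (p1 + p2) = Polynomial.C p1 + Polynomial.C p2 := map_add _ _ _
    rw [this]
    have hCm : Polynomial.C (p1 * (p1 + p2)) = Polynomial.C p1 * (Polynomial.C p1 + Polynomial.C p2) := by
      rw [map_mul, map_add]
    rw [hCm]
    linear_combination (q * Polynomial.C p1) * h2'

lemma Q_succ (h2 : (2 : R) = 0) {n : ℕ} (v : Fin (n+1) → R) :
    Q v = Q (v ∘ Fin.castSucc) ^ 2
      + Polynomial.C (piF (v ∘ Fin.castSucc) (v (Fin.last n))) * Q (v ∘ Fin.castSucc) := by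
  have hXC : ∀ x y : R, x = y → Polynomial.X + Polynomial.C x = Polynomial.X + Polynomial.C y :=
    fun x y h => by rw [h]
  have hQ : Q v = Q (v ∘ Fin.castSucc) * (Q (v ∘ Fin.castSucc)
      + Polynomial.C (piF (v ∘ Fin.castSucc) (v (Fin.last n)))) := by
    rw [Q, prod_split]
    congr 1
    · rw [Q]
      refine Finset.prod_congr rfl fun c _ => ?_
      rw [bS_snoc]; exact hXC _ _ (by simp)
    · rw [← key h2 (v ∘ Fin.castSucc) (v (Fin.last n))]
      refine Finset.prod_congr rfl fun c _ => ?_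
      rw [bS_snoc]; exact hXC _ _ (by simp)
  rw [hQ]; ring

lemma Q_form [CharP R 2] : ∀ {n : ℕ} (v : Fin n → R),
    ∃ c : ℕ → R, (∀ i, n < i → c i = 0) ∧
      Q v = ∑ i ∈ Finset.range (n+1), Polynomial.C (c i) * Polynomial.X ^ 2^i := by
  intro n
  induction n with
  | zero =>
    intro v
    refine ⟨fun i => if i = 0 then 1 else 0, fun i hi => if_neg (by omega), ?_⟩
    have hu : ∀ c : Fin 0 → Bool, bS v c = 0 := by intro c; simp [bS]
    simp [Q, hu]
  | succ n ih =>
    intro v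
    have h2 : (2 : R) = 0 := by exact_mod_cast CharP.cast_eq_zero R 2
    obtain ⟨c, hc0, hc⟩ := ih (v ∘ Fin.castSucc)
    set π : R := piF (v ∘ Fin.castSucc) (v (Fin.last n)) with hπ
    set dd : ℕ → R := fun i => Nat.rec (π * c 0) (fun j _ => c j ^ 2 + π * c (j+1)) i with hdd
    have hd0 : dd 0 = π * c 0 := rfl
    have hds : ∀ j, dd (j+1) = c j ^ 2 + π * c (j+1) := fun j => rfl
    refine ⟨dd, ?_, ?_⟩
    · intro i hi
      match i, hi with
      | (j+1), hi =>
        rw [hds j, hc0 j (by omega), hc0 (j+1) (by omega)]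
        ring
    · rw [Q_succ h2 v, hc]
      have hsq : (∑ i ∈ Finset.range (n+1), Polynomial.C (c i) * Polynomial.X ^ 2^i) ^ 2
          = ∑ i ∈ Finset.range (n+1), Polynomial.C (c i ^ 2) * Polynomial.X ^ 2^(i+1) := by
        rw [sum_pow_char]
        refine Finset.sum_congr rfl fun i _ => ?_
        rw [mul_pow, ← map_pow, ← pow_mul, pow_succ 2 i]
      rw [hsq, Finset.mul_sum]
      rw [Finset.sum_range_succ' (fun i => Polynomial.C (dd i) * Polynomial.X ^ 2^i) (n+1)]
      have hmul : (∑ i ∈ Finset.range (n+1), Polynomial.C π * (Polynomial.C (c i) * Polynomial.X ^ 2^i))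
          = (∑ i ∈ Finset.range (n+1), Polynomial.C (π * c (i+1)) * Polynomial.X ^ 2^(i+1))
            + Polynomial.C (π * c 0) * Polynomial.X ^ 2^0 := by
        rw [Finset.sum_range_succ (fun i => Polynomial.C (π * c (i+1)) * Polynomial.X ^ 2^(i+1)) n,
          hc0 (n+1) (by omega),
          Finset.sum_range_succ' (fun i => Polynomial.C π * (Polynomial.C (c i) * Polynomial.X ^ 2^i)) n]
        simp only [mul_zero, map_zero, zero_mul, add_zero, map_mul]
        congr 1
        · refine Finset.sum_congr rfl fun i _ => by ring
        · ring
      rw [hmul, ← add_assoc, ← Finset.sum_add_distrib]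
      congr 1
      · refine Finset.sum_congr rfl fun i _ => ?_
        rw [hds i, map_add]
        ring


lemma esymm_zero' (s : Multiset R) : s.esymm 0 = 1 := by
  simp [Multiset.esymm]

lemma coeff_Q {n k : ℕ} (v : Fin n → R) (hk : k ≤ 2^n) :
    (Q v).coeff k = (Finset.univ.val.map (bS v)).esymm (2^n - k) := by
  have hcard : Multiset.card ((Finset.univ : Finset (Fin n → Bool)).val) = 2^n := by
    rw [← Finset.card_def, Finset.card_univ]
    simp [Fintype.card_fun]
  rw [Q, Finset.prod_eq_multiset_prod,
    Multiset.prod_X_add_C_coeff' _ (bS v) (by rw [hcard]; exact hk), hcard]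

lemma coeff_sq [CharP R 2] (p : Polynomial R) (m : ℕ) : (p^2).coeff (2*m) = p.coeff m ^ 2 := by
  haveI : Fact (Nat.Prime 2) := ⟨Nat.prime_two⟩
  rw [← Polynomial.map_frobenius_expand (p := 2) p, Polynomial.coeff_map,
    Polynomial.coeff_expand (by norm_num : 0 < 2)]
  simp [frobenius_def, Nat.mul_div_cancel_left m (by norm_num : 0 < 2)]

def boolEquiv {n : ℕ} : (Fin n → Bool) ≃ Finset (Fin n) where
  toFun c := Finset.univ.filter (fun j => c j = true)
  invFun s := fun j => decide (j ∈ s)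
  left_inv c := by funext j; by_cases h : c j <;> simp [h]
  right_inv s := by ext j; simp

lemma bS_eq {n : ℕ} (v : Fin n → R) (c : Fin n → Bool) :
    bS v c = ∑ j ∈ boolEquiv c, v j := by
  rw [bS, boolEquiv]
  simp [Finset.sum_filter]

lemma span_val {n : ℕ} (v : Fin n → R)
    (hinj : Function.Injective (fun s : Finset (Fin n) => ∑ j ∈ s, v j)) :
    (spanF2 v).val = Finset.univ.val.map (bS v) := by
  classical
  simp only [spanF2]
  rw [Finset.image_val,
    Multiset.dedup_eq_self.mpr ((Finset.univ.nodup).map hinj)]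
  conv_lhs => rw [← Finset.map_univ_equiv (boolEquiv (n := n))]
  rw [Finset.map_val, Multiset.map_map]
  exact Multiset.map_congr rfl (fun c _ => (bS_eq v c).symm)

lemma sum_X_injective {m : ℕ} {σ : Type*} (g : Fin m → σ) (hg : Function.Injective g) :
    Function.Injective (fun s : Finset (Fin m) => ∑ j ∈ s, (X (g j) : MvPolynomial σ (ZMod 2))) := by
  classical
  intro s t h
  ext j
  have h1 := congrArg (MvPolynomial.coeff (Finsupp.single (g j) 1)) h
  simp only [MvPolynomial.coeff_sum, MvPolynomial.coeff_X'] at h1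
  have hcond : ∀ k, (Finsupp.single (g k) (1:ℕ) = Finsupp.single (g j) 1) ↔ k = j := by
    intro k
    rw [Finsupp.single_left_inj (one_ne_zero), hg.eq_iff]
  simp only [fun k => propext (hcond k)] at h1
  rw [Finset.sum_ite_eq' s j, Finset.sum_ite_eq' t j] at h1
  by_cases hs : j ∈ s <;> by_cases ht : j ∈ t <;>
    simp only [hs, ht, if_true, if_false, iff_true, iff_false] <;> simp [hs, ht] at h1


section Assembly

variable {n : ℕ}

local notation "RR" => MvPolynomial (Fin (n+1)) (ZMod 2)

lemma assembled (n : ℕ) (hn : 1 ≤ n) :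
    dickson (fun i : Fin (n + 1) => (X i : MvPolynomial (Fin (n + 1)) (ZMod 2))) 1
        = prodAdd (fun i : Fin n => (X i.castSucc : MvPolynomial (Fin (n + 1)) (ZMod 2)))
            (X (Fin.last n))
          + dickson (fun i : Fin n => (X i.castSucc : MvPolynomial (Fin (n + 1)) (ZMod 2))) 1 ^ 2 ∧
    dickson (fun i : Fin (n + 1) => (X i : MvPolynomial (Fin (n + 1)) (ZMod 2))) 1
        = X (Fin.last n) ^ 2 ^ n
          + ∑ i ∈ Finset.Icc 1 n, X (Fin.last n) ^ 2 ^ (n - i)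
              * dickson (fun j : Fin n => (X j.castSucc : MvPolynomial (Fin (n + 1)) (ZMod 2))) i
          + dickson (fun i : Fin n => (X i.castSucc : MvPolynomial (Fin (n + 1)) (ZMod 2))) 1 ^ 2 := by
  set R := MvPolynomial (Fin (n+1)) (ZMod 2)
  haveI : CharP R 2 := inferInstance
  have h2 : (2 : R) = 0 := by exact_mod_cast CharP.cast_eq_zero R 2
  set vp : Fin (n+1) → R := fun i => X i with hvp
  set v' : Fin n → R := fun i => X i.castSucc with hv'd
  have hv' : vp ∘ Fin.castSucc = v' := rfl
  set a : R := X (Fin.last n) with ha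
  have hinjp : Function.Injective (fun s : Finset (Fin (n+1)) => ∑ j ∈ s, vp j) :=
    sum_X_injective (id : Fin (n+1) → Fin (n+1)) Function.injective_id
  have hinj' : Function.Injective (fun s : Finset (Fin n) => ∑ j ∈ s, v' j) :=
    sum_X_injective Fin.castSucc (Fin.castSucc_injective n)
  -- dickson of the big family is a coefficient of Q vp
  have hDp : dickson vp 1 = (Q vp).coeff (2^n) := by
    rw [dickson, span_val vp hinjp, coeff_Q vp (by
      have : (2:ℕ)^n ≤ 2^(n+1) := Nat.pow_le_pow_right (by norm_num) (by omega)
      exact this)]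
    norm_num
  -- dickson of the small family
  have hD' : ∀ i : ℕ, i ≤ n → dickson v' i = (Q v').coeff (2^(n-i)) := by
    intro i hi
    rw [dickson, span_val v' hinj', coeff_Q v' (Nat.pow_le_pow_right (by norm_num) (by omega))]
  -- leading coefficient of Q v'
  have htop : (Q v').coeff (2^n) = 1 := by
    rw [coeff_Q v' le_rfl, Nat.sub_self, esymm_zero']
  -- prodAdd is piF
  have hPA : ∀ w : R, prodAdd v' w = piF v' w := by
    intro w
    rw [prodAdd, Finset.prod_eq_multiset_prod, span_val v' hinj', Multiset.map_map, piF,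
      Finset.prod_eq_multiset_prod]
    rfl
  -- the coefficient computation
  have hsucc : (Q vp).coeff (2^n) = (dickson v' 1)^2 + piF v' a := by
    rw [Q_succ h2 vp, hv']
    rw [Polynomial.coeff_add, Polynomial.coeff_C_mul, htop, mul_one]
    congr 1
    have h2n : 2^n = 2 * 2^(n-1) := by
      rw [← pow_succ']
      congr 1
      omega
    rw [h2n, coeff_sq, hD' 1 hn]
  -- Part (ii): expansion of piF v' a
  obtain ⟨c, hc0, hc⟩ := Q_form (R := R) v'
  have hcoeff : ∀ i, i ≤ n → (Q v').coeff (2^i) = c i := by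
    intro i hi
    rw [hc, Polynomial.finset_sum_coeff]
    rw [Finset.sum_eq_single i]
    · rw [Polynomial.coeff_C_mul, Polynomial.coeff_X_pow, if_pos rfl, mul_one]
    · intro j _ hji
      rw [Polynomial.coeff_C_mul, Polynomial.coeff_X_pow,
        if_neg (fun hexp => hji (Nat.pow_right_injective le_rfl hexp).symm), mul_zero]
    · intro hni
      exact absurd (Finset.mem_range.mpr (by omega)) hni
  have hpi : piF v' a = ∑ i ∈ Finset.range (n+1), (Q v').coeff (2^i) * a^(2^i) := by
    rw [← eval_Q v' a]
    conv_lhs => rw [hc]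
    rw [Polynomial.eval_finset_sum]
    refine Finset.sum_congr rfl fun i hi => ?_
    rw [Polynomial.eval_mul, Polynomial.eval_C, Polynomial.eval_pow, Polynomial.eval_X,
      hcoeff i (Nat.lt_succ_iff.mp (Finset.mem_range.mp hi))]
  have hrefl : piF v' a
      = ∑ i ∈ Finset.range (n+1), (Q v').coeff (2^(n+1-1-i)) * a^(2^(n+1-1-i)) := by
    rw [hpi, ← Finset.sum_range_reflect (fun i => (Q v').coeff (2^i) * a^(2^i)) (n+1)]
  have hfin : piF v' a = a^(2^n) + ∑ i ∈ Finset.Icc 1 n, a^(2^(n-i)) * dickson v' i := by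
    rw [hrefl]
    have hre : ∀ i : ℕ, n + 1 - 1 - i = n - i := fun i => by omega
    simp only [hre]
    rw [Finset.sum_range_succ' (fun i => (Q v').coeff (2^(n-i)) * a^(2^(n-i))) n]
    rw [add_comm]
    refine congrArg₂ (· + ·) ?_ ?_
    · rw [Nat.sub_zero, htop, one_mul]
    · refine Finset.sum_nbij' (fun k => k + 1) (fun i => i - 1) ?_ ?_ ?_ ?_ ?_
      · intro k hk
        rw [Finset.mem_range] at hk
        show k + 1 ∈ Finset.Icc 1 n
        rw [Finset.mem_Icc]
        omega
      · intro i hi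
        rw [Finset.mem_Icc] at hi
        show i - 1 ∈ Finset.range n
        rw [Finset.mem_range]
        omega
      · intro k _
        show k + 1 - 1 = k
        omega
      · intro i hi
        rw [Finset.mem_Icc] at hi
        show i - 1 + 1 = i
        omega
      · intro k hk
        rw [Finset.mem_range] at hk
        rw [hD' (k+1) (by omega), mul_comm]
  refine ⟨?_, ?_⟩
  · rw [hDp, hsucc, hPA]
    exact add_comm _ _
  · rw [hDp, hsucc, hfin]
    ring

end Assembly
end Stmt6Aux


theorem stmt_6 (n : ℕ) (hn : 1 ≤ n) :
    dickson (fun i : Fin (n + 1) => (X i : MvPolynomial (Fin (n + 1)) (ZMod 2))) 1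
        = prodAdd (fun i : Fin n => (X i.castSucc : MvPolynomial (Fin (n + 1)) (ZMod 2)))
            (X (Fin.last n))
          + dickson (fun i : Fin n => (X i.castSucc : MvPolynomial (Fin (n + 1)) (ZMod 2))) 1 ^ 2 ∧
    dickson (fun i : Fin (n + 1) => (X i : MvPolynomial (Fin (n + 1)) (ZMod 2))) 1
        = X (Fin.last n) ^ 2 ^ n
          + ∑ i ∈ Finset.Icc 1 n, X (Fin.last n) ^ 2 ^ (n - i)
              * dickson (fun j : Fin n => (X j.castSucc : MvPolynomial (Fin (n + 1)) (ZMod 2))) i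
          + dickson (fun i : Fin n => (X i.castSucc : MvPolynomial (Fin (n + 1)) (ZMod 2))) 1 ^ 2 := by
  exact Stmt6Aux.assembled n hn
end
end

section
/- Let σ be the F_2-algebra endomorphism of F_2[x,y,z,w] with σ(x) = x, σ(y) = y, σ(z) = z, σ(w) = z + w, and let κ be the F_2-algebra automorphism of F_2[x,y,z,w] fixing x and y and exchanging z and w. Then: σ(c_2) = c_2, σ(c_3) = c_3, σ(c'_4) = c'_4, and σ(c''_4) = c'_4 + c''_4; in particular ∏_{α ∈ span_{F_2}{x,y}} (z + w + α) = c'_4 + c''_4. Moreover κ(c_2) = c_2, κ(c_3) = c_3, κ(c'_4) = c''_4, and κ(c''_4) = c'_4. Hence these substitutions fix c_2 and c_3 and permute the three elements c'_4, c''_4, c'_4 + c''_4. -/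
/-!
If `a, b` are linearly independent over `𝔽₂` in a ring of characteristic 2, their span is
`{0, a, b, a + b}`, and expanding the product gives Dickson's identity
`P(t) := ∏_{α ∈ span(a, b)} (t + α) = t⁴ + D₁ t² + D₂ t` with `D₁ = a² + ab + b²`,
`D₂ = a²b + ab²`. By the Frobenius, `P` is additive. A ring endomorphism fixing `a` and `b`
fixes `D₁`, `D₂` and so maps `P(t)` to `P(f t)`. With `c'₄ = P(z)`, `c''₄ = P(w)` this gives
`σ c''₄ = P(z + w) = c'₄ + c''₄`, while `κ` swaps `P(z)` and `P(w)`.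
-/

noncomputable section

open MvPolynomial

/-- The polynomial ring `𝔽₂[x, y, z, w]`. -/
abbrev R4 := MvPolynomial (Fin 4) (ZMod 2)

def xP : R4 := X 0
def yP : R4 := X 1
def zP : R4 := X 2
def wP : R4 := X 3

def a8 : R4 := dickson ![xP, yP, zP, wP] 1
def a12 : R4 := dickson ![xP, yP, zP, wP] 2
def a14 : R4 := dickson ![xP, yP, zP, wP] 3
def a15 : R4 := dickson ![xP, yP, zP, wP] 4

def b4 : R4 := dickson ![xP, yP, zP] 1
def b6 : R4 := dickson ![xP, yP, zP] 2
def b7 : R4 := dickson ![xP, yP, zP] 3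
def b8 : R4 := prodAdd ![xP, yP, zP] wP

def c2 : R4 := dickson ![xP, yP] 1
def c3 : R4 := dickson ![xP, yP] 2
def c4' : R4 := prodAdd ![xP, yP] zP
def c4'' : R4 := prodAdd ![xP, yP] wP

/-- The `𝔽₂`-algebra endomorphism `σ` of `𝔽₂[x,y,z,w]` with `σ(x) = x`, `σ(y) = y`,
`σ(z) = z` and `σ(w) = z + w`. -/
def sigmaEnd : R4 →ₐ[ZMod 2] R4 := aeval ![xP, yP, zP, zP + wP]

/-- The `𝔽₂`-algebra automorphism `κ` of `𝔽₂[x,y,z,w]` fixing `x` and `y` and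
exchanging `z` and `w`. -/
def kappaEnd : R4 →ₐ[ZMod 2] R4 := aeval ![xP, yP, wP, zP]

namespace Multiset
variable {R : Type*} [CommSemiring R]

theorem esymm_zero (s : Multiset R) : s.esymm 0 = 1 := by
  simp [esymm]

theorem zero_esymm_succ (n : ℕ) : (0 : Multiset R).esymm (n + 1) = 0 := by
  simp [esymm, powersetCard_zero_right]

theorem esymm_cons_succ (x : R) (s : Multiset R) (n : ℕ) :
    (x ::ₘ s).esymm (n + 1) = s.esymm (n + 1) + x * s.esymm n := by
  simp [esymm, powersetCard_cons, sum_map_mul_left]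

end Multiset

section Pair

variable {R : Type*} [CommRing R]

theorem spanF2_pair [DecidableEq R] (a b : R) : spanF2 ![a, b] = {0, a, b, a + b} := by
  ext c
  simp only [spanF2, Finset.mem_image, Finset.mem_univ, true_and, Finset.mem_insert,
    Finset.mem_singleton]
  constructor
  · rintro ⟨s, rfl⟩
    fin_cases s <;> simp
  · rintro (rfl | rfl | rfl | rfl)
    exacts [⟨∅, by simp⟩, ⟨{0}, by simp⟩, ⟨{1}, by simp⟩, ⟨{0, 1}, by simp⟩]

variable [CharP R 2] {a b : R}

theorem spanF2_pair_val (ha : a ≠ 0) (hb : b ≠ 0) (hab : a ≠ b) :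
    (spanF2 ![a, b]).val = {0, a, b, a + b} := by
  classical
  have hab' : a + b ≠ 0 := by rwa [Ne, CharTwo.add_eq_zero]
  have ha' : a ≠ a + b := by rwa [Ne, eq_comm, add_eq_left]
  have hb' : b ≠ a + b := by rwa [Ne, eq_comm, add_eq_right]
  rw [spanF2_pair, Finset.insert_val_of_notMem (by simp [ha.symm, hb.symm, hab'.symm]),
    Finset.insert_val_of_notMem (by simp [hab, ha']), Finset.insert_val_of_notMem (by simp [hb'])]
  rfl

theorem dickson_pair_one (ha : a ≠ 0) (hb : b ≠ 0) (hab : a ≠ b) :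
    dickson ![a, b] 1 = a ^ 2 + a * b + b ^ 2 := by
  show (spanF2 ![a, b]).val.esymm 2 = _
  simp only [spanF2_pair_val ha hb hab, Multiset.insert_eq_cons, ← Multiset.cons_zero,
    Multiset.esymm_cons_succ, Multiset.esymm_zero, Multiset.zero_esymm_succ]
  linear_combination (a * b) * CharTwo.two_eq_zero (R := R)

theorem dickson_pair_two (ha : a ≠ 0) (hb : b ≠ 0) (hab : a ≠ b) :
    dickson ![a, b] 2 = a ^ 2 * b + a * b ^ 2 := by
  show (spanF2 ![a, b]).val.esymm 3 = _
  simp only [spanF2_pair_val ha hb hab, Multiset.insert_eq_cons, ← Multiset.cons_zero,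
    Multiset.esymm_cons_succ, Multiset.esymm_zero, Multiset.zero_esymm_succ]
  ring

theorem prodAdd_pair (ha : a ≠ 0) (hb : b ≠ 0) (hab : a ≠ b) (t : R) :
    prodAdd ![a, b] t = t ^ 4 + dickson ![a, b] 1 * t ^ 2 + dickson ![a, b] 2 * t := by
  rw [prodAdd, Finset.prod_eq_multiset_prod, spanF2_pair_val ha hb hab,
    dickson_pair_one ha hb hab, dickson_pair_two ha hb hab]
  simp only [Multiset.insert_eq_cons, Multiset.map_cons, Multiset.map_singleton,
    Multiset.prod_cons, Multiset.prod_singleton]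
  linear_combination ((a + b) * t ^ 3 + a * b * t ^ 2) * CharTwo.two_eq_zero (R := R)

theorem prodAdd_pair_add (ha : a ≠ 0) (hb : b ≠ 0) (hab : a ≠ b) (s t : R) :
    prodAdd ![a, b] (s + t) = prodAdd ![a, b] s + prodAdd ![a, b] t := by
  have add_pow_four : (s + t) ^ 4 = s ^ 4 + t ^ 4 := add_pow_char_pow (p := 2) (n := 2) s t
  simp only [prodAdd_pair ha hb hab, add_pow_four, CharTwo.add_sq]
  ring

theorem map_prodAdd_pair {F : Type*} [FunLike F R R] [RingHomClass F R R] (f : F)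
    (ha : a ≠ 0) (hb : b ≠ 0) (hab : a ≠ b) (hfa : f a = a) (hfb : f b = b) (t : R) :
    f (prodAdd ![a, b] t) = prodAdd ![a, b] (f t) := by
  simp only [prodAdd_pair ha hb hab, dickson_pair_one ha hb hab, dickson_pair_two ha hb hab,
    map_add, map_mul, map_pow, hfa, hfb]

theorem map_dickson_pair_one {F : Type*} [FunLike F R R] [RingHomClass F R R] (f : F)
    (ha : a ≠ 0) (hb : b ≠ 0) (hab : a ≠ b) (hfa : f a = a) (hfb : f b = b) :
    f (dickson ![a, b] 1) = dickson ![a, b] 1 := by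
  simp only [dickson_pair_one ha hb hab, map_add, map_mul, map_pow, hfa, hfb]

theorem map_dickson_pair_two {F : Type*} [FunLike F R R] [RingHomClass F R R] (f : F)
    (ha : a ≠ 0) (hb : b ≠ 0) (hab : a ≠ b) (hfa : f a = a) (hfb : f b = b) :
    f (dickson ![a, b] 2) = dickson ![a, b] 2 := by
  simp only [dickson_pair_two ha hb hab, map_add, map_mul, map_pow, hfa, hfb]

end Pair

theorem xP_ne_zero : xP ≠ 0 := X_ne_zero _
theorem yP_ne_zero : yP ≠ 0 := X_ne_zero _
theorem xP_ne_yP : xP ≠ yP := (X_injective (σ := Fin 4) (R := ZMod 2)).ne (by decide)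

theorem sigmaEnd_xP : sigmaEnd xP = xP := by simp [sigmaEnd, xP]
theorem sigmaEnd_yP : sigmaEnd yP = yP := by simp [sigmaEnd, yP]
theorem sigmaEnd_zP : sigmaEnd zP = zP := by simp [sigmaEnd, zP]
theorem sigmaEnd_wP : sigmaEnd wP = zP + wP := by simp [sigmaEnd, wP]
theorem kappaEnd_xP : kappaEnd xP = xP := by simp [kappaEnd, xP]
theorem kappaEnd_yP : kappaEnd yP = yP := by simp [kappaEnd, yP]
theorem kappaEnd_zP : kappaEnd zP = wP := by simp [kappaEnd, zP]
theorem kappaEnd_wP : kappaEnd wP = zP := by simp [kappaEnd, wP]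

theorem stmt_11 :
    sigmaEnd c2 = c2 ∧ sigmaEnd c3 = c3 ∧ sigmaEnd c4' = c4' ∧
    sigmaEnd c4'' = c4' + c4'' ∧
    prodAdd ![xP, yP] (zP + wP) = c4' + c4'' ∧
    kappaEnd c2 = c2 ∧ kappaEnd c3 = c3 ∧ kappaEnd c4' = c4'' ∧ kappaEnd c4'' = c4' ∧
    (⇑sigmaEnd '' {c4', c4'', c4' + c4''} = {c4', c4'', c4' + c4''}) ∧
    (⇑kappaEnd '' {c4', c4'', c4' + c4''} = {c4', c4'', c4' + c4''}) := by
  have hx := xP_ne_zero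
  have hy := yP_ne_zero
  have hxy := xP_ne_yP
  have c4_sum : prodAdd ![xP, yP] (zP + wP) = c4' + c4'' := prodAdd_pair_add hx hy hxy _ _
  have σc4' : sigmaEnd c4' = c4' := by
    rw [c4', map_prodAdd_pair _ hx hy hxy sigmaEnd_xP sigmaEnd_yP, sigmaEnd_zP]
  have σc4'' : sigmaEnd c4'' = c4' + c4'' := by
    rw [c4'', map_prodAdd_pair _ hx hy hxy sigmaEnd_xP sigmaEnd_yP, sigmaEnd_wP]
    exact c4_sum
  have κc4' : kappaEnd c4' = c4'' := by
    rw [c4', c4'', map_prodAdd_pair _ hx hy hxy kappaEnd_xP kappaEnd_yP, kappaEnd_zP]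
  have κc4'' : kappaEnd c4'' = c4' := by
    rw [c4', c4'', map_prodAdd_pair _ hx hy hxy kappaEnd_xP kappaEnd_yP, kappaEnd_wP]
  refine ⟨map_dickson_pair_one _ hx hy hxy sigmaEnd_xP sigmaEnd_yP,
    map_dickson_pair_two _ hx hy hxy sigmaEnd_xP sigmaEnd_yP, σc4', σc4'', c4_sum,
    map_dickson_pair_one _ hx hy hxy kappaEnd_xP kappaEnd_yP,
    map_dickson_pair_two _ hx hy hxy kappaEnd_xP kappaEnd_yP, κc4', κc4'', ?_, ?_⟩
  · rw [Set.image_insert_eq, Set.image_insert_eq, Set.image_singleton, map_add, σc4', σc4'',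
      CharTwo.add_cancel_left, Set.pair_comm]
  · rw [Set.image_insert_eq, Set.image_insert_eq, Set.image_singleton, map_add, κc4', κc4'',
      add_comm, Set.insert_comm]
end
end

section
/- Let p be a prime and let G = G_1 × G_2 be a product of finite groups. If a p-subgroup P ≤ G is p-centric in G and F_p(G)-radical, then P = P_1 × P_2 for subgroups P_1 ≤ G_1 and P_2 ≤ G_2, and each P_i is p-centric in G_i and F_p(G_i)-radical. -/
/-- A subgroup `P ≤ G` is `p`-centric in `G` if every element of `p`-power order in the
centralizer `C_G(P)` lies in `P`. -/
def IsPCentric (p : ℕ) {G : Type*} [Group G] (P : Subgroup G) : Prop :=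
  ∀ g ∈ Subgroup.centralizer (P : Set G), (∃ n : ℕ, g ^ p ^ n = 1) → g ∈ P

/-- The subgroup `P ⬝ C_G(P)` of the normalizer `N_G(P)`, i.e. the kernel of
`N_G(P) → Out_G(P)`. -/
def outKer {G : Type*} [Group G] (P : Subgroup G) : Subgroup (Subgroup.normalizer (P : Set G)) :=
  (P ⊔ Subgroup.centralizer (P : Set G)).subgroupOf (Subgroup.normalizer (P : Set G))

instance outKer_normal {G : Type*} [Group G] (P : Subgroup G) : (outKer P).Normal := by
  constructor
  intro n hn g
  rw [outKer, Subgroup.mem_subgroupOf] at hn ⊢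
  have key : ∀ x : G, x ∈ (Subgroup.normalizer (P : Set G)) →
      ∀ y ∈ P ⊔ Subgroup.centralizer (P : Set G),
        x * y * x⁻¹ ∈ P ⊔ Subgroup.centralizer (P : Set G) := by
    intro x hx y hy
    have hPle : P.map (MulAut.conj x).toMonoidHom
        ≤ P ⊔ Subgroup.centralizer (P : Set G) := by
      rintro _ ⟨y, hyP, rfl⟩
      exact Subgroup.mem_sup_left
        (by simpa using (Subgroup.mem_normalizer_iff.mp hx y).mp hyP)
    have hCle : (Subgroup.centralizer (P : Set G)).map (MulAut.conj x).toMonoidHom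
        ≤ P ⊔ Subgroup.centralizer (P : Set G) := by
      rintro _ ⟨y, hyC, rfl⟩
      have hyC' : ∀ h ∈ P, h * y = y * h := fun h hh =>
        Subgroup.mem_centralizer_iff.mp hyC h hh
      refine Subgroup.mem_sup_right (Subgroup.mem_centralizer_iff.mpr ?_)
      intro h hh
      have hh' : x⁻¹ * h * x ∈ P := by
        refine (Subgroup.mem_normalizer_iff.mp hx (x⁻¹ * h * x)).mpr ?_
        have : x * (x⁻¹ * h * x) * x⁻¹ = h := by group
        rw [this]
        exact hh
      have hcomm := hyC' _ hh'
      have : (MulAut.conj x).toMonoidHom y = x * y * x⁻¹ := by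
        simp [MulAut.conj_apply]
      rw [this]
      calc h * (x * y * x⁻¹) = x * ((x⁻¹ * h * x) * y) * x⁻¹ := by group
        _ = x * (y * (x⁻¹ * h * x)) * x⁻¹ := by rw [hcomm]
        _ = x * y * x⁻¹ * h := by group
    have hmap : (P ⊔ Subgroup.centralizer (P : Set G)).map (MulAut.conj x).toMonoidHom
        ≤ P ⊔ Subgroup.centralizer (P : Set G) := by
      rw [Subgroup.map_sup]
      exact sup_le hPle hCle
    have := hmap (Subgroup.mem_map_of_mem _ hy)
    simpa using this
  have := key (g : G) g.2 (n : G) hn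
  simpa [mul_assoc] using this

/-- `Out_G(P) = N_G(P) / (P ⬝ C_G(P))`. -/
def OutG {G : Type*} [Group G] (P : Subgroup G) : Type _ :=
  (Subgroup.normalizer (P : Set G)) ⧸ outKer P

instance {G : Type*} [Group G] (P : Subgroup G) : Group (OutG P) :=
  inferInstanceAs (Group ((Subgroup.normalizer (P : Set G)) ⧸ outKer P))

/-- A subgroup `P ≤ G` is `F_p(G)`-radical if `Out_G(P) = N_G(P)/(P ⬝ C_G(P))` has no
nontrivial normal `p`-subgroup. -/
def IsFpRadical (p : ℕ) {G : Type*} [Group G] (P : Subgroup G) : Prop :=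
  ∀ K : Subgroup (OutG P), K.Normal → IsPGroup p K → K = ⊥

/-!
Let `Q = P₁ × P₂`, where `Pᵢ` is the projection of `P` to `Gᵢ`. Then `Q` is a `p`-group containing
`P` and normalized by `N_G(P)`, so the image of `Q ∩ N_G(P)` in `Out_G(P)` is a normal `p`-subgroup,
hence trivial. Thus every `g ∈ N_Q(P)` is `x c` with `x ∈ P` and `c ∈ C_G(P) ∩ Q`, and centricity
puts `c` in `P`; so `N_Q(P) = P`, which in the nilpotent group `Q` forces `P = Q`. For a product
the normalizer and the centralizer split, so `Out_G(P₁ × P₂) ≅ Out_{G₁}(P₁) × Out_{G₂}(P₂)`, and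
both properties pass to the factors.
-/

open Subgroup

theorem IsPGroup.prod {p : ℕ} {A B : Type*} [Group A] [Group B] (hA : IsPGroup p A)
    (hB : IsPGroup p B) : IsPGroup p (A × B) := by
  rintro ⟨a, b⟩
  obtain ⟨m, hm⟩ := hA a
  obtain ⟨n, hn⟩ := hB b
  refine ⟨m + n, Prod.ext ?_ ?_⟩
  · change a ^ p ^ (m + n) = 1
    rw [pow_add, pow_mul, hm, one_pow]
  · change b ^ p ^ (m + n) = 1
    rw [add_comm, pow_add, pow_mul, hn, one_pow]

namespace Subgroup

section Group

variable {G : Type*} [Group G]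

theorem le_normalizer_centralizer (P : Subgroup G) : P ≤ normalizer (centralizer (P : Set G)) :=
  le_normalizer.trans (le_normalizer_of_normal_subgroupOf (centralizer_le_normalizer _))

theorem exists_mul_of_mem_sup_centralizer {P : Subgroup G} {g : G}
    (hg : g ∈ P ⊔ centralizer (P : Set G)) :
    ∃ x ∈ P, ∃ c ∈ centralizer (P : Set G), x * c = g := by
  rw [← SetLike.mem_coe, coe_mul_of_left_le_normalizer_right _ _ P.le_normalizer_centralizer] at hg
  obtain ⟨x, hx, c, hc, rfl⟩ := hg
  exact ⟨x, hx, c, hc, rfl⟩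

theorem eq_of_inf_normalizer_le {P Q : Subgroup G} [Group.IsNilpotent Q] (hPQ : P ≤ Q)
    (h : Q ⊓ normalizer (P : Set G) ≤ P) : P = Q := by
  have hself : normalizer (P.subgroupOf Q : Set Q) = P.subgroupOf Q := by
    refine le_antisymm ?_ le_normalizer
    rw [← subgroupOf_normalizer_eq hPQ]
    exact fun g hg => mem_subgroupOf.mpr (h ⟨g.2, hg⟩)
  have htop := normalizerCondition_iff_only_full_group_self_normalizing.mp
    Group.normalizerCondition_of_isNilpotent _ hself
  exact le_antisymm hPQ (subgroupOf_eq_top.mp htop)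

end Group

section Prod

variable {G₁ G₂ : Type*} [Group G₁] [Group G₂]

theorem normalizer_prod (P₁ : Subgroup G₁) (P₂ : Subgroup G₂) :
    normalizer ((P₁.prod P₂ : Subgroup (G₁ × G₂)) : Set (G₁ × G₂)) =
      (normalizer (P₁ : Set G₁)).prod (normalizer (P₂ : Set G₂)) := by
  ext ⟨n₁, n₂⟩
  simp only [mem_normalizer_iff, mem_prod, Prod.forall, Prod.mk_mul_mk, Prod.inv_mk]
  refine ⟨fun h => ⟨fun a => ?_, fun b => ?_⟩, fun h a b => and_congr (h.1 a) (h.2 b)⟩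
  · simpa using h a 1
  · simpa using h 1 b

theorem centralizer_prod (P₁ : Subgroup G₁) (P₂ : Subgroup G₂) :
    centralizer ((P₁.prod P₂ : Subgroup (G₁ × G₂)) : Set (G₁ × G₂)) =
      (centralizer (P₁ : Set G₁)).prod (centralizer (P₂ : Set G₂)) :=
  SetLike.coe_injective <|
    Set.centralizer_prod (OneMemClass.coe_nonempty P₁) (OneMemClass.coe_nonempty P₂)

theorem prod_sup_prod (H₁ K₁ : Subgroup G₁) (H₂ K₂ : Subgroup G₂) :
    H₁.prod H₂ ⊔ K₁.prod K₂ = (H₁ ⊔ K₁).prod (H₂ ⊔ K₂) := by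
  refine le_antisymm (sup_le (prod_mono le_sup_left le_sup_left)
    (prod_mono le_sup_right le_sup_right)) (prod_le_iff.mpr ⟨?_, ?_⟩)
  · rw [map_sup]
    exact sup_le_sup (prod_le_iff.mp le_rfl).1 (prod_le_iff.mp le_rfl).1
  · rw [map_sup]
    exact sup_le_sup (prod_le_iff.mp le_rfl).2 (prod_le_iff.mp le_rfl).2

end Prod

end Subgroup

/-- `O_p(H) = 1`; `IsFpRadical p P` is this property of `OutG P`. -/
def HasNoNormalPSubgroup (p : ℕ) (H : Type*) [Group H] : Prop :=
  ∀ K : Subgroup H, K.Normal → IsPGroup p K → K = ⊥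

namespace HasNoNormalPSubgroup

variable {p : ℕ} {A B : Type*} [Group A] [Group B]

theorem of_mulEquiv (e : A ≃* B) (h : HasNoNormalPSubgroup p A) : HasNoNormalPSubgroup p B :=
  fun K hK hKp => by
    have := h (K.comap (e : A →* B)) (hK.comap _) (hKp.comap_of_injective _ e.injective)
    rwa [comap_equiv_eq_map_symm, map_eq_bot_iff_of_injective _ e.symm.injective] at this

theorem fst (h : HasNoNormalPSubgroup p (A × B)) : HasNoNormalPSubgroup p A :=
  fun K _ hKp =>
    (prod_eq_bot_iff.mp (h (K.prod ⊥) inferInstance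
      ((hKp.prod IsPGroup.of_bot).of_equiv (prodEquiv K ⊥).symm))).1

theorem snd (h : HasNoNormalPSubgroup p (A × B)) : HasNoNormalPSubgroup p B :=
  (h.of_mulEquiv MulEquiv.prodComm).fst

end HasNoNormalPSubgroup

theorem IsFpRadical.inf_normalizer_le {p : ℕ} {G : Type*} [Group G] {P Q : Subgroup G}
    (hr : IsFpRadical p P) (hc : IsPCentric p P) (hQ : IsPGroup p Q) (hPQ : P ≤ Q)
    (hN : normalizer (P : Set G) ≤ normalizer (Q : Set G)) :
    Q ⊓ normalizer (P : Set G) ≤ P := by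
  rintro g ⟨hgQ, hgN⟩
  let M : Subgroup (OutG P) := (Q.subgroupOf (normalizer (P : Set G))).map (QuotientGroup.mk' _)
  have hQnormal : (Q.subgroupOf (normalizer (P : Set G))).Normal :=
    ⟨fun n hn k => mem_subgroupOf.mpr ((mem_normalizer_iff.mp (hN k.2) n).mp hn)⟩
  have hM : M = ⊥ :=
    hr M (hQnormal.map _ (QuotientGroup.mk'_surjective _)) (hQ.comap_subtype.map _)
  have hgM : (QuotientGroup.mk' (outKer P) ⟨g, hgN⟩ : OutG P) ∈ M :=
    mem_map_of_mem _ (mem_subgroupOf.mpr hgQ)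
  have hgK : (⟨g, hgN⟩ : normalizer (P : Set G)) ∈ outKer P :=
    (QuotientGroup.eq_one_iff _).mp ((mem_bot (G := OutG P)).mp (hM ▸ hgM))
  rw [outKer, mem_subgroupOf] at hgK
  obtain ⟨x, hxP, c, hcC, rfl⟩ := exists_mul_of_mem_sup_centralizer hgK
  have hcQ : c ∈ Q := by simpa using mul_mem (inv_mem (hPQ hxP)) hgQ
  exact mul_mem hxP (hc c hcC (hQ ⟨c, hcQ⟩ |>.imp fun _ h => congrArg Subtype.val h))

section Prod

variable {G₁ G₂ : Type*} [Group G₁] [Group G₂]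

def normalizerProdEquiv (P₁ : Subgroup G₁) (P₂ : Subgroup G₂) :
    normalizer ((P₁.prod P₂ : Subgroup (G₁ × G₂)) : Set (G₁ × G₂)) ≃*
      normalizer (P₁ : Set G₁) × normalizer (P₂ : Set G₂) :=
  (MulEquiv.subgroupCongr (normalizer_prod P₁ P₂)).trans (prodEquiv _ _)

theorem map_outKer_prod (P₁ : Subgroup G₁) (P₂ : Subgroup G₂) :
    (outKer (P₁.prod P₂)).map (normalizerProdEquiv P₁ P₂).toMonoidHom =
      (outKer P₁).prod (outKer P₂) := by
  ext ⟨n₁, n₂⟩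
  rw [mem_map_equiv]
  simp only [outKer, mem_subgroupOf, centralizer_prod, prod_sup_prod]
  exact Iff.rfl

def outProdEquiv (P₁ : Subgroup G₁) (P₂ : Subgroup G₂) :
    OutG (P₁.prod P₂) ≃* OutG P₁ × OutG P₂ :=
  (QuotientGroup.congr _ _ (normalizerProdEquiv P₁ P₂) (map_outKer_prod P₁ P₂)).trans
    (QuotientGroup.prodMulEquiv _ _)

variable {p : ℕ} {P₁ : Subgroup G₁} {P₂ : Subgroup G₂}

theorem IsPCentric.of_prod (hc : IsPCentric p (P₁.prod P₂)) :
    IsPCentric p P₁ ∧ IsPCentric p P₂ := by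
  rw [IsPCentric, centralizer_prod] at hc
  refine ⟨fun g hg ⟨n, hn⟩ => ?_, fun g hg ⟨n, hn⟩ => ?_⟩
  · exact (mem_prod.mp (hc (g, 1) (mem_prod.mpr ⟨hg, one_mem _⟩) ⟨n, by simp [hn]⟩)).1
  · exact (mem_prod.mp (hc (1, g) (mem_prod.mpr ⟨one_mem _, hg⟩) ⟨n, by simp [hn]⟩)).2

theorem IsFpRadical.of_prod (hr : IsFpRadical p (P₁.prod P₂)) :
    IsFpRadical p P₁ ∧ IsFpRadical p P₂ :=
  have h : HasNoNormalPSubgroup p (OutG P₁ × OutG P₂) :=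
    HasNoNormalPSubgroup.of_mulEquiv (outProdEquiv P₁ P₂) hr
  ⟨h.fst, h.snd⟩

end Prod

theorem stmt_14 (p : ℕ) (hp : p.Prime) {G₁ G₂ : Type*} [Group G₁] [Group G₂]
    [Finite G₁] [Finite G₂] (P : Subgroup (G₁ × G₂)) (hP : IsPGroup p P)
    (hc : IsPCentric p P) (hr : IsFpRadical p P) :
    ∃ (P₁ : Subgroup G₁) (P₂ : Subgroup G₂),
      P = P₁.prod P₂ ∧
      IsPCentric p P₁ ∧ IsFpRadical p P₁ ∧
      IsPCentric p P₂ ∧ IsFpRadical p P₂ := by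
  have : Fact p.Prime := ⟨hp⟩
  set Q := (P.map (MonoidHom.fst G₁ G₂)).prod (P.map (MonoidHom.snd G₁ G₂))
  have hPQ : P ≤ Q := le_prod_iff.mpr ⟨le_rfl, le_rfl⟩
  have hQ : IsPGroup p Q := ((hP.map _).prod (hP.map _)).of_equiv (prodEquiv _ _).symm
  have hN : normalizer (P : Set (G₁ × G₂)) ≤ normalizer (Q : Set (G₁ × G₂)) := by
    rw [normalizer_prod]
    exact le_prod_iff.mpr ⟨le_normalizer_map _, le_normalizer_map _⟩
  have := hQ.isNilpotent
  have hPeq : P = Q := eq_of_inf_normalizer_le hPQ (hr.inf_normalizer_le hc hQ hPQ hN)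
  rw [hPeq] at hc hr
  exact ⟨_, _, hPeq, hc.of_prod.1, hr.of_prod.1, hc.of_prod.2, hr.of_prod.2⟩
end

section
/- Let p be a prime, G a finite group, and H a normal subgroup of G. If a p-subgroup P ≤ H is p-centric in G and F_p(G)-radical, then P is p-centric in H and F_p(H)-radical. -/
/-! Centralizers and normalizers of `P` taken in `H` are the traces on `H` of those taken in `G`
(for `P ⊔ C_G(P)` this is Dedekind's law, as `P` normalizes `C_G(P)`). Hence `Out_H(P)` embeds in
`Out_G(P)`, as a normal subgroup because `H` is normal. A normal `p`-subgroup `K` of `Out_H(P)` is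
then normal in a normal subgroup of `Out_G(P)`, so its normal closure in `Out_G(P)` is a normal
`p`-subgroup, which is trivial by radicality. -/

open Subgroup

/- The conjugates of `Q` lie in `R` and are normal in `R`, so their join is a `p`-group by
`Sylow.iSup_of_normal`. -/
theorem IsPGroup.normalClosure_of_le_of_le_normalizer {p : ℕ} {Γ : Type*} [Group Γ]
    {Q R : Subgroup Γ} [R.Normal] (hQ : IsPGroup p Q) (hQR : Q ≤ R)
    (hRQ : R ≤ normalizer (Q : Set Γ)) :
    IsPGroup p (normalClosure (Q : Set Γ)) := by
  set conj : Γ → Subgroup Γ := fun g ↦ Q.map (MulAut.conj g)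
  have conj_le : ∀ g, conj g ≤ R := fun g ↦
    (map_mono hQR).trans_eq (Normal.map_conj_eq R g)
  have normal_conj : ∀ g, ((conj g).subgroupOf R).Normal := fun g ↦ by
    rw [normal_subgroupOf_iff_le_normalizer (conj_le g)]
    calc R = R.map (MulAut.conj g) := (Normal.map_conj_eq R g).symm
      _ ≤ (normalizer (Q : Set Γ)).map (MulAut.conj g) := map_mono hRQ
      _ = normalizer (conj g : Set Γ) := map_equiv_normalizer_eq Q (MulAut.conj g)
  have hsup : IsPGroup p ↥(⨆ g, (conj g).subgroupOf R) :=
    Sylow.iSup_of_normal _ fun g ↦ (hQ.map _).comap_subtype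
  refine (hsup.map R.subtype).to_le ?_
  simp only [Subgroup.map_iSup, subgroupOf_map_subtype, inf_of_le_left (conj_le _)]
  rw [normalClosure, closure_le]
  intro x hx
  obtain ⟨a, ha, hax⟩ := Group.mem_conjugatesOfSet_iff.mp hx
  obtain ⟨g, rfl⟩ := isConj_iff.mp hax
  exact mem_iSup_of_mem g ⟨a, ha, rfl⟩

theorem Subgroup.normal_isPGroup_eq_bot_of_injective {p : ℕ} {A Γ : Type*} [Group A] [Group Γ]
    (hΓ : ∀ N : Subgroup Γ, N.Normal → IsPGroup p N → N = ⊥) {ψ : A →* Γ}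
    (hψ : Function.Injective ψ) (hψR : ψ.range.Normal) :
    ∀ K : Subgroup A, K.Normal → IsPGroup p K → K = ⊥ := by
  intro K hKn hK
  have range_le : ψ.range ≤ normalizer (K.map ψ : Set Γ) := by
    rw [MonoidHom.range_eq_map, ← normalizer_eq_top_iff.mpr hKn]
    exact le_normalizer_map ψ
  have closure_eq_bot : normalClosure (K.map ψ : Set Γ) = ⊥ := hΓ _ inferInstance
    ((hK.map ψ).normalClosure_of_le_of_le_normalizer (map_le_range ψ K) range_le)
  rw [← map_eq_bot_iff_of_injective K hψ, eq_bot_iff, ← closure_eq_bot]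
  exact le_normalClosure

section RelativeToSubgroup

variable {G : Type*} [Group G] {H P : Subgroup G}

theorem centralizer_subgroupOf (hPH : P ≤ H) :
    centralizer (P.subgroupOf H : Set H) = (centralizer (P : Set G)).subgroupOf H := by
  ext x
  simp only [mem_subgroupOf, mem_centralizer_iff, SetLike.mem_coe]
  exact ⟨fun hx y hy ↦ congrArg Subtype.val (hx ⟨y, hPH hy⟩ hy),
    fun hx y hy ↦ Subtype.ext (hx y hy)⟩

theorem sup_centralizer_inf_of_le (hPH : P ≤ H) :
    (P ⊔ centralizer (P : Set G)) ⊓ H = P ⊔ centralizer (P : Set G) ⊓ H := by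
  have hP : P ≤ normalizer (centralizer (P : Set G) : Set G) := le_normalizer.trans
    (le_normalizer_of_normal_subgroupOf (centralizer_le_normalizer (P : Set G)))
  have hP' : P ≤ normalizer ((centralizer (P : Set G) ⊓ H : Subgroup G) : Set G) :=
    (le_inf hP (hPH.trans le_normalizer)).trans inf_normalizer_le_normalizer_inf
  apply SetLike.coe_injective
  rw [coe_inf, coe_mul_of_left_le_normalizer_right _ _ hP, ← mul_inf_assoc _ _ _ hPH,
    coe_mul_of_left_le_normalizer_right _ _ hP']

theorem sup_centralizer_subgroupOf (hPH : P ≤ H) :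
    (P ⊔ centralizer (P : Set G)).subgroupOf H =
      P.subgroupOf H ⊔ centralizer (P.subgroupOf H : Set H) := by
  rw [centralizer_subgroupOf hPH, ← inf_subgroupOf_right, sup_centralizer_inf_of_le hPH,
    subgroupOf_sup hPH inf_le_right, inf_subgroupOf_right]

theorem mem_normalizer_subgroupOf_iff (hPH : P ≤ H) {x : H} :
    x ∈ normalizer (P.subgroupOf H : Set H) ↔ (x : G) ∈ normalizer (P : Set G) := by
  rw [← subgroupOf_normalizer_eq hPH, mem_subgroupOf]

def normalizerSubgroupOfHom (hPH : P ≤ H) :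
    normalizer (P.subgroupOf H : Set H) →* normalizer (P : Set G) :=
  (H.subtype.comp (normalizer _).subtype).codRestrict _ fun x ↦
    (mem_normalizer_subgroupOf_iff hPH).mp x.2

theorem normalizerSubgroupOfHom_range (hPH : P ≤ H) :
    (normalizerSubgroupOfHom hPH).range = H.subgroupOf (normalizer (P : Set G)) := by
  ext y
  constructor
  · rintro ⟨x, rfl⟩
    exact x.1.2
  · exact fun hy ↦ ⟨⟨⟨y, hy⟩, (mem_normalizer_subgroupOf_iff hPH).mpr y.2⟩, rfl⟩

theorem outKer_subgroupOf_eq_comap (hPH : P ≤ H) :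
    outKer (P.subgroupOf H) = (outKer P).comap (normalizerSubgroupOfHom hPH) := by
  ext x
  rw [outKer, outKer, mem_comap, mem_subgroupOf, mem_subgroupOf,
    ← sup_centralizer_subgroupOf hPH, mem_subgroupOf]
  rfl

def outMapSubgroupOf (hPH : P ≤ H) :
    normalizer (P.subgroupOf H : Set H) ⧸ outKer (P.subgroupOf H) →*
      normalizer (P : Set G) ⧸ outKer P :=
  QuotientGroup.map _ _ (normalizerSubgroupOfHom hPH) (outKer_subgroupOf_eq_comap hPH).le

theorem outMapSubgroupOf_injective (hPH : P ≤ H) : Function.Injective (outMapSubgroupOf hPH) := by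
  rw [← MonoidHom.ker_eq_bot_iff, outMapSubgroupOf, QuotientGroup.ker_map,
    ← outKer_subgroupOf_eq_comap, QuotientGroup.map_mk'_self]

theorem outMapSubgroupOf_range_normal (hH : H.Normal) (hPH : P ≤ H) :
    (outMapSubgroupOf hPH).range.Normal := by
  have range_eq : (outMapSubgroupOf hPH).range =
      (normalizerSubgroupOfHom hPH).range.map (QuotientGroup.mk' (outKer P)) := by
    calc (outMapSubgroupOf hPH).range
        = (QuotientGroup.mk' _).range.map (outMapSubgroupOf hPH) := by
          rw [MonoidHom.range_eq_top.mpr (QuotientGroup.mk'_surjective _),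
            ← MonoidHom.range_eq_map]
      _ = ((QuotientGroup.mk' _).comp (normalizerSubgroupOfHom hPH)).range :=
          MonoidHom.map_range ..
      _ = _ := MonoidHom.range_comp ..
  rw [range_eq, normalizerSubgroupOfHom_range]
  exact (hH.subgroupOf _).map _ (QuotientGroup.mk'_surjective _)

theorem IsPCentric.subgroupOf {p : ℕ} (hPH : P ≤ H) (hc : IsPCentric p P) :
    IsPCentric p (P.subgroupOf H) := by
  rintro g hg ⟨n, hn⟩
  rw [centralizer_subgroupOf hPH, mem_subgroupOf] at hg
  exact mem_subgroupOf.mpr (hc g hg ⟨n, by simpa using congrArg Subtype.val hn⟩)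

theorem IsFpRadical.subgroupOf {p : ℕ} (hH : H.Normal) (hPH : P ≤ H) (hr : IsFpRadical p P) :
    IsFpRadical p (P.subgroupOf H) :=
  normal_isPGroup_eq_bot_of_injective hr (outMapSubgroupOf_injective hPH)
    (outMapSubgroupOf_range_normal hH hPH)

end RelativeToSubgroup

theorem stmt_15_general (p : ℕ) {G : Type*} [Group G]
    (H : Subgroup G) (hH : H.Normal) (P : Subgroup G) (hPH : P ≤ H)
    (hc : IsPCentric p P) (hr : IsFpRadical p P) :
    IsPCentric p (P.subgroupOf H) ∧ IsFpRadical p (P.subgroupOf H) :=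
  ⟨hc.subgroupOf hPH, hr.subgroupOf hH hPH⟩

theorem stmt_15 (p : ℕ) (hp : p.Prime) {G : Type*} [Group G] [Finite G]
    (H : Subgroup G) (hH : H.Normal) (P : Subgroup G) (hPH : P ≤ H)
    (hP : IsPGroup p P) (hc : IsPCentric p P) (hr : IsFpRadical p P) :
    IsPCentric p (P.subgroupOf H) ∧ IsFpRadical p (P.subgroupOf H) :=
  stmt_15_general p H hH P hPH hc hr
end

section
/- Let p be a prime, G a finite group, and H a normal subgroup of G whose index [G:H] is a power of p. If a p-subgroup P ≤ G is p-centric in G and F_p(G)-radical, then P ∩ H is p-centric in H and F_p(H)-radical. -/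
/-!
Write `Q = P ⊓ H` and let `W ≤ N_H(Q)` be normalized by `N_G(P)`, each of its elements having a
`p`-power in `Q ⬝ C_H(Q)`. If `c ∈ C_H(Q)` normalizes `P`, its commutators with `P` lie in `Q`
and commute with `c`, so `c ^ |P|` centralizes `P`. Hence `W ∩ N_G(P)` maps onto a normal
`p`-subgroup of `Out_G(P)`, which is trivial, and `p`-centricity puts the `p`-elements of
`W ∩ N_G(P)` into `P`. For a Sylow subgroup `S ≥ P` of `P ⬝ W`, the normalizer of `P` in the
`p`-group `P ⬝ (S ∩ W)` is therefore `P`, so `S ∩ W ≤ P`; conjugating by `P ⬝ W ≤ N_G(Q)`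
puts every `p`-element of `W` into `Q`. Taking `W = Q ⬝ C_H(Q)` gives `p`-centricity of `Q`
in `H`; taking `W` the preimage of the characteristic subgroup `O_p(Out_H(Q))` gives
`O_p(Out_H(Q)) = 1`.
-/

open Subgroup

section Conjugation

variable {G : Type*} [Group G]

theorem normalizer_le_normalizer_centralizer (P : Subgroup G) :
    normalizer (P : Set G) ≤ normalizer (centralizer (P : Set G) : Set G) := by
  refine le_normalizer_iff.mpr fun n hn c hc => mem_centralizer_iff.mpr fun y hy => ?_
  have hy' : n⁻¹ * y * n ∈ P := by
    simpa using (mem_normalizer_iff.mp (inv_mem hn) y).mp hy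
  have hcomm : n⁻¹ * y * n * c = c * (n⁻¹ * y * n) := mem_centralizer_iff.mp hc _ hy'
  calc y * (n * c * n⁻¹) = n * (n⁻¹ * y * n * c) * n⁻¹ := by group
    _ = n * (c * (n⁻¹ * y * n)) * n⁻¹ := by rw [hcomm]
    _ = n * c * n⁻¹ * y := by group

theorem conj_pow_eq_pow_mul_of_commute {x y d : G} (hd : Commute x d)
    (hxy : x * y * x⁻¹ = d * y) (n : ℕ) : x ^ n * y * (x ^ n)⁻¹ = d ^ n * y := by
  induction n with
  | zero => simp
  | succ n ih =>
    calc x ^ (n + 1) * y * (x ^ (n + 1))⁻¹ = x * (x ^ n * y * (x ^ n)⁻¹) * x⁻¹ := by group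
      _ = x * d ^ n * x⁻¹ * (x * y * x⁻¹) := by rw [ih]; group
      _ = d ^ n * (d * y) := by rw [(hd.pow_right n).eq, hxy]; group
      _ = d ^ (n + 1) * y := by rw [pow_succ, mul_assoc]

/-- `x` commutes with each commutator `x * y * x⁻¹ * y⁻¹ ∈ P ⊓ H` (`y ∈ P`), so conjugation by
`x ^ n` sends `y` to `(x * y * x⁻¹ * y⁻¹) ^ n * y`. -/
theorem pow_card_mem_centralizer {P H : Subgroup G} (hH : H.Normal) {x : G}
    (hxN : x ∈ normalizer (P : Set G)) (hxH : x ∈ H)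
    (hxC : x ∈ centralizer ((P ⊓ H : Subgroup G) : Set G)) :
    x ^ Nat.card P ∈ centralizer (P : Set G) := by
  refine mem_centralizer_iff.mpr fun y (hy : y ∈ P) => ?_
  have hd : x * y * x⁻¹ * y⁻¹ ∈ P ⊓ H := by
    refine mem_inf.mpr ⟨mul_mem ((mem_normalizer_iff.mp hxN y).mp hy) (inv_mem hy), ?_⟩
    rw [show x * y * x⁻¹ * y⁻¹ = x * (y * x⁻¹ * y⁻¹) by group]
    exact mul_mem hxH (hH.conj_mem _ (inv_mem hxH) y)
  have hpow : (x * y * x⁻¹ * y⁻¹) ^ Nat.card P = 1 := by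
    have h := congrArg Subtype.val (pow_card_eq_one' (x := (⟨_, hd.1⟩ : P)))
    rwa [SubgroupClass.coe_pow, OneMemClass.coe_one] at h
  have hconj := conj_pow_eq_pow_mul_of_commute (y := y) (mem_centralizer_iff.mp hxC _ hd).symm
    (by group) (Nat.card P)
  rw [hpow, one_mul] at hconj
  calc y * x ^ Nat.card P = x ^ Nat.card P * y * (x ^ Nat.card P)⁻¹ * x ^ Nat.card P := by
        rw [hconj]
    _ = x ^ Nat.card P * y := by group

end Conjugation

section PGroups

variable {p : ℕ} {G : Type*} [Group G]

theorem IsPGroup.exists_pow_pow_eq_one_of_mem {P : Subgroup G} (hP : IsPGroup p P) {x : G}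
    (hx : x ∈ P) : ∃ n, x ^ p ^ n = 1 := by
  obtain ⟨n, hn⟩ := hP ⟨x, hx⟩
  exact ⟨n, congrArg Subtype.val hn⟩

open scoped Pointwise in
theorem Sylow.exists_conj_mem_of_pow_pow_eq_one [Fact p.Prime] [Finite G] (S : Sylow p G)
    {g : G} (hg : ∃ n, g ^ p ^ n = 1) : ∃ m : G, m * g * m⁻¹ ∈ S := by
  obtain ⟨n, hn⟩ := hg
  have hZ : IsPGroup p (zpowers g) :=
    IsPGroup.of_card_dvd_pow (n := n) (Nat.card_zpowers g ▸ orderOf_dvd_of_pow_eq_one hn)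
  obtain ⟨S', hS'⟩ := hZ.exists_le_sylow
  obtain ⟨m, rfl⟩ := MulAction.exists_smul_eq G S' S
  refine ⟨m, ?_⟩
  change m * g * m⁻¹ ∈ MulAut.conj m • (S' : Subgroup G)
  exact smul_mem_pointwise_smul _ (MulAut.conj m) _ (hS' (mem_zpowers g))

theorem IsPCentric.mem_of_mem_sup_centralizer {P : Subgroup G} (hc : IsPCentric p P)
    (hP : IsPGroup p P) {x : G} (hx : x ∈ P ⊔ centralizer (P : Set G))
    (hxp : ∃ n, x ^ p ^ n = 1) : x ∈ P := by
  rw [← SetLike.mem_coe, coe_mul_of_right_le_normalizer_left P _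
    (centralizer_le_normalizer _)] at hx
  obtain ⟨u, hu, c, hcC, rfl⟩ := hx
  obtain ⟨n, hn⟩ := hxp
  have hcomm : Commute u c := mem_centralizer_iff.mp hcC u hu
  have hcP : c ^ p ^ n ∈ P := by
    have h1 : u ^ p ^ n * c ^ p ^ n = 1 := by rw [← hcomm.mul_pow]; exact hn
    rw [eq_inv_of_mul_eq_one_right h1]
    exact inv_mem (pow_mem hu _)
  obtain ⟨m, hm⟩ := hP.exists_pow_pow_eq_one_of_mem hcP
  exact mul_mem hu (hc c hcC ⟨n + m, by rw [pow_add, pow_mul, hm]⟩)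

/-- The normalizer of `P` in the `p`-group `P ⊔ T = P * T` is `P * (T ⊓ N(P)) = P`, so the
normalizer condition forces `P ⊔ T = P`. -/
theorem IsPGroup.le_of_inf_normalizer_le [Fact p.Prime] [Finite G] {P T : Subgroup G}
    (hP : IsPGroup p P) (hT : IsPGroup p T) (hPT : P ≤ normalizer (T : Set G))
    (h : T ⊓ normalizer (P : Set G) ≤ P) : T ≤ P := by
  have := (hP.to_sup_of_normal_right' hT hPT).isNilpotent
  have hself : normalizer (P.subgroupOf (P ⊔ T) : Set (P ⊔ T : Subgroup G)) =
      P.subgroupOf (P ⊔ T) := by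
    refine le_antisymm (fun x hx => ?_) le_normalizer
    rw [← subgroupOf_normalizer_eq le_sup_left, mem_subgroupOf] at hx
    rw [mem_subgroupOf]
    obtain ⟨u, hu, t, ht, hut⟩ :=
      (Set.ext_iff.mp (coe_mul_of_left_le_normalizer_right P T hPT) x).mp x.2
    have htN : t ∈ normalizer (P : Set G) := by
      rw [show t = u⁻¹ * x by rw [← hut]; group]
      exact mul_mem (inv_mem (le_normalizer hu)) hx
    rw [← hut]
    exact mul_mem hu (h ⟨ht, htN⟩)
  exact le_sup_right.trans (subgroupOf_eq_top.mp
    (normalizerCondition_iff_only_full_group_self_normalizing.mp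
      Group.normalizerCondition_of_isNilpotent _ hself))

theorem exists_pow_map_eq_of_pow_pow_eq_one [Fact p.Prime] {A B : Type*} [Group A] [Finite A]
    [Group B] (f : A →* B) (a : A) {e : ℕ} (he : f a ^ p ^ e = 1) :
    ∃ N : ℕ, (∃ s, (a ^ N) ^ p ^ s = 1) ∧ f (a ^ N) = f a := by
  set s := (orderOf a).factorization p
  set m := orderOf a / p ^ s
  have hcop : m.Coprime (orderOf (f a)) :=
    ((Nat.coprime_ordCompl Fact.out (orderOf_pos a).ne').symm.pow_right e).coprime_dvd_right
      (orderOf_dvd_of_pow_eq_one he)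
  obtain ⟨j, hj⟩ := exists_pow_eq_self_of_coprime hcop
  refine ⟨m * j, ⟨s, ?_⟩, by rw [map_pow, pow_mul, hj]⟩
  rw [← pow_mul, show m * j * p ^ s = orderOf a * j by
    rw [← Nat.ordProj_mul_ordCompl_eq_self (orderOf a) p]; ring]
  rw [pow_mul, pow_orderOf_eq_one, one_pow]

end PGroups

section PCore

variable (p : ℕ) (X : Type*) [Group X]

/-- `O_p(X)`, the largest normal `p`-subgroup of a finite group `X`. -/
def pCore : Subgroup X := sSup {J : Subgroup X | J.Normal ∧ IsPGroup p J}

instance pCore_normal : (pCore p X).Normal := by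
  rw [pCore, sSup_eq_iSup]
  exact biSup_normal _ id fun _ hJ => hJ.1

variable {p X}

theorem le_pCore {J : Subgroup X} (hJ : J.Normal) (hJp : IsPGroup p J) : J ≤ pCore p X :=
  le_sSup ⟨hJ, hJp⟩

/-- Every normal `p`-subgroup lies in a fixed Sylow `p`-subgroup. -/
theorem isPGroup_pCore [Fact p.Prime] [Finite X] : IsPGroup p (pCore p X) := by
  obtain ⟨S⟩ := (inferInstance : Nonempty (Sylow p X))
  refine S.isPGroup'.to_le (sSup_le fun J hJ => ?_)
  have := hJ.1
  exact hJ.2.le_sylow_of_normal S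

theorem map_pCore_le [Fact p.Prime] [Finite X] {Y : Type*} [Group Y] {f : X →* Y}
    (hf : Function.Surjective f) : (pCore p X).map f ≤ pCore p Y :=
  le_pCore ((pCore_normal p X).map f hf) (isPGroup_pCore.map f)

end PCore

namespace OutG

variable {X : Type*} [Group X] (R : Subgroup X)

def mk : normalizer (R : Set X) →* OutG R := QuotientGroup.mk' (outKer R)

theorem mk_surjective : Function.Surjective (mk R) := QuotientGroup.mk'_surjective _

theorem mk_eq_one_iff {x : normalizer (R : Set X)} :
    mk R x = 1 ↔ (x : X) ∈ R ⊔ centralizer (R : Set X) :=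
  (QuotientGroup.eq_one_iff x).trans mem_subgroupOf

instance [Finite X] : Finite (OutG R) :=
  inferInstanceAs (Finite (normalizer (R : Set X) ⧸ outKer R))

variable {R} {σ : MulAut X}

theorem map_normalizer_of_map_eq (hσ : R.map σ.toMonoidHom = R) :
    (normalizer (R : Set X)).map σ.toMonoidHom = normalizer (R : Set X) := by
  rw [map_equiv_normalizer_eq, hσ]

theorem map_sup_centralizer_le_of_map_eq (hσ : R.map σ.toMonoidHom = R) :
    (R ⊔ centralizer (R : Set X)).map σ.toMonoidHom ≤ R ⊔ centralizer (R : Set X) := by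
  rw [Subgroup.map_sup, hσ]
  refine sup_le_sup_left ((map_centralizer_le_centralizer_image _ _).trans ?_) _
  rw [← coe_map, hσ]

def mapAut (σ : MulAut X) (hσ : R.map σ.toMonoidHom = R) : OutG R →* OutG R :=
  QuotientGroup.map (outKer R) (outKer R)
    ((σ.toMonoidHom.domRestrict (normalizer (R : Set X))).codRestrict (normalizer (R : Set X))
      fun x => (map_normalizer_of_map_eq hσ).le (mem_map_of_mem _ x.2))
    fun _ hx => mem_subgroupOf.mpr
      (map_sup_centralizer_le_of_map_eq hσ (mem_map_of_mem _ (mem_subgroupOf.mp hx)))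

theorem mapAut_mk (hσ : R.map σ.toMonoidHom = R) (x : normalizer (R : Set X))
    (hx : σ x ∈ normalizer (R : Set X)) : mapAut σ hσ (mk R x) = mk R ⟨σ x, hx⟩ :=
  rfl

theorem mapAut_surjective (hσ : R.map σ.toMonoidHom = R) :
    Function.Surjective (mapAut σ hσ) := by
  intro z
  obtain ⟨⟨y, hy⟩, rfl⟩ := mk_surjective R z
  rw [← map_normalizer_of_map_eq hσ] at hy
  obtain ⟨x, hx, rfl⟩ := hy
  exact ⟨mk R ⟨x, hx⟩, mapAut_mk hσ _ _⟩

/-- `O_p(Out_X(R))` is characteristic. -/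
theorem mk_apply_mem_pCore {p : ℕ} [Fact p.Prime] [Finite X] (hσ : R.map σ.toMonoidHom = R)
    {x : normalizer (R : Set X)} (hx : mk R x ∈ pCore p (OutG R))
    (hσx : σ x ∈ normalizer (R : Set X)) : mk R ⟨σ x, hσx⟩ ∈ pCore p (OutG R) :=
  map_pCore_le (mapAut_surjective hσ) ⟨_, hx, mapAut_mk hσ x hσx⟩

end OutG

section Restriction

variable {p : ℕ} {G : Type*} [Group G] {P Q H : Subgroup G}

theorem normalizer_le_normalizer_inf_of_normal (hH : H.Normal) :
    normalizer (P : Set G) ≤ normalizer ((P ⊓ H : Subgroup G) : Set G) := by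
  have := hH
  exact (le_inf le_rfl le_normalizer_of_normal).trans inf_normalizer_le_normalizer_inf

theorem normalizer_le_normalizer_centralizer_inf (hH : H.Normal) :
    normalizer (Q : Set G) ≤ normalizer ((centralizer (Q : Set G) ⊓ H : Subgroup G) : Set G) := by
  have := hH
  exact (le_inf (normalizer_le_normalizer_centralizer Q) le_normalizer_of_normal).trans
    inf_normalizer_le_normalizer_inf

theorem normalizer_le_normalizer_sup_centralizer_inf (hH : H.Normal) :
    normalizer (Q : Set G) ≤
      normalizer ((Q ⊔ centralizer (Q : Set G) ⊓ H : Subgroup G) : Set G) :=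
  (le_inf le_rfl (normalizer_le_normalizer_centralizer_inf hH)).trans
    (normalizer_inf_normalizer_le_normalizer_sup _ _)

/-- Writing `y ^ p ^ m = q * c` with `q ∈ P ⊓ H` and `c ∈ C_H(P ⊓ H)`, the factor `c`
normalizes `P`, so `c ^ |P|` centralizes `P` and the image of `y` in `Out_G(P)` is a
`p`-element. -/
theorem OutG.exists_mk_pow_pow_eq_one [Fact p.Prime] [Finite G] (hH : H.Normal)
    (hP : IsPGroup p P) {y : normalizer (P : Set G)} {m : ℕ}
    (hy : (y : G) ^ p ^ m ∈ (P ⊓ H) ⊔ (centralizer ((P ⊓ H : Subgroup G) : Set G) ⊓ H)) :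
    ∃ n, OutG.mk P y ^ p ^ n = 1 := by
  obtain ⟨k, hk⟩ := hP.exists_card_eq
  rw [← SetLike.mem_coe, coe_mul_of_left_le_normalizer_right _ _
    (le_normalizer.trans (normalizer_le_normalizer_centralizer_inf hH))] at hy
  obtain ⟨q, hq, c, hc, hqc⟩ := hy
  have hqN : q ∈ normalizer (P : Set G) := le_normalizer (mem_inf.mp hq).1
  have hcN : c ∈ normalizer (P : Set G) := by
    rw [show c = q⁻¹ * (y : G) ^ p ^ m by rw [← hqc]; group]
    exact mul_mem (inv_mem hqN) (pow_mem y.2 _)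
  have hyqc : y ^ p ^ m = ⟨q, hqN⟩ * ⟨c, hcN⟩ := Subtype.ext (by simpa using hqc.symm)
  have hq1 : OutG.mk P ⟨q, hqN⟩ = 1 :=
    (OutG.mk_eq_one_iff P).mpr (mem_sup_left (mem_inf.mp hq).1)
  have hc1 : OutG.mk P ⟨c, hcN⟩ ^ p ^ k = 1 := by
    rw [← map_pow, OutG.mk_eq_one_iff]
    refine mem_sup_right ?_
    simpa [hk] using pow_card_mem_centralizer hH hcN (mem_inf.mp hc).2 (mem_inf.mp hc).1
  refine ⟨m + k, ?_⟩
  rw [pow_add, pow_mul, ← map_pow, hyqc, map_mul, hq1, one_mul, hc1]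

theorem IsFpRadical.mem_of_pow_pow_eq_one [Fact p.Prime] [Finite G] (hH : H.Normal)
    (hP : IsPGroup p P) (hc : IsPCentric p P) (hr : IsFpRadical p P) {W : Subgroup G}
    (hW : normalizer (P : Set G) ≤ normalizer (W : Set G))
    (hWpow : ∀ w ∈ W, ∃ m, w ^ p ^ m ∈
      (P ⊓ H) ⊔ (centralizer ((P ⊓ H : Subgroup G) : Set G) ⊓ H))
    {x : G} (hxW : x ∈ W) (hxN : x ∈ normalizer (P : Set G)) (hx : ∃ n, x ^ p ^ n = 1) :
    x ∈ P := by
  set D := (W.subgroupOf (normalizer (P : Set G))).map (OutG.mk P)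
  have hDn : D.Normal := by
    refine Normal.map ?_ _ (OutG.mk_surjective P)
    exact normal_subgroupOf_iff_le_normalizer_inf.mpr
      ((le_inf hW le_normalizer).trans inf_normalizer_le_normalizer_inf)
  have hDp : IsPGroup p D := by
    rintro ⟨_, y, hyW, rfl⟩
    obtain ⟨m, hm⟩ := hWpow _ (mem_subgroupOf.mp hyW)
    obtain ⟨n, hn⟩ := OutG.exists_mk_pow_pow_eq_one hH hP hm
    exact ⟨n, Subtype.ext hn⟩
  have hxD : OutG.mk P ⟨x, hxN⟩ ∈ D := mem_map_of_mem _ (mem_subgroupOf.mpr hxW)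
  rw [hr D hDn hDp, mem_bot, OutG.mk_eq_one_iff] at hxD
  exact hc.mem_of_mem_sup_centralizer hP hxD hx

/-- A `p`-element of `W` is conjugate in `P ⊔ W` into `S ⊓ W` for a Sylow subgroup `S ≥ P` of
`P ⊔ W`, and `IsFpRadical.mem_of_pow_pow_eq_one` with the normalizer condition gives
`S ⊓ W ≤ P`. -/
theorem IsFpRadical.mem_inf_of_pow_pow_eq_one [Fact p.Prime] [Finite G] (hH : H.Normal)
    (hP : IsPGroup p P) (hc : IsPCentric p P) (hr : IsFpRadical p P) {W : Subgroup G}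
    (hWH : W ≤ H) (hWQ : W ≤ normalizer ((P ⊓ H : Subgroup G) : Set G))
    (hW : normalizer (P : Set G) ≤ normalizer (W : Set G))
    (hWpow : ∀ w ∈ W, ∃ m, w ^ p ^ m ∈
      (P ⊓ H) ⊔ (centralizer ((P ⊓ H : Subgroup G) : Set G) ⊓ H))
    {g : G} (hgW : g ∈ W) (hg : ∃ n, g ^ p ^ n = 1) : g ∈ P ⊓ H := by
  set M := P ⊔ W
  obtain ⟨S, hPS⟩ := (hP.comap_subtype (K := M)).exists_le_sylow
  set S' := (S : Subgroup M).map M.subtype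
  have hS' : IsPGroup p S' := S.isPGroup'.map _
  have hPS' : P ≤ S' := fun u hu => ⟨⟨u, le_sup_left (b := W) hu⟩, hPS hu, rfl⟩
  have hMW : M ≤ normalizer (W : Set G) := sup_le (le_normalizer.trans hW) le_normalizer
  have hTP : S' ⊓ W ≤ P := by
    refine hP.le_of_inf_normalizer_le hS'.to_inf_left
      ((le_inf (hPS'.trans le_normalizer) (le_sup_left.trans hMW)).trans
        inf_normalizer_le_normalizer_inf) ?_
    rintro t ⟨⟨htS, htW⟩, htN⟩
    exact hr.mem_of_pow_pow_eq_one hH hP hc hW hWpow htW htN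
      (hS'.exists_pow_pow_eq_one_of_mem htS)
  obtain ⟨m, hm⟩ := S.exists_conj_mem_of_pow_pow_eq_one (g := ⟨g, le_sup_right (a := P) hgW⟩)
    (by obtain ⟨n, hn⟩ := hg; exact ⟨n, Subtype.ext hn⟩)
  have hmgW : (m : G) * g * (m : G)⁻¹ ∈ W := (mem_normalizer_iff.mp (hMW m.2) g).mp hgW
  have hmg : (m : G) * g * (m : G)⁻¹ ∈ P ⊓ H :=
    ⟨hTP ⟨⟨_, hm, rfl⟩, hmgW⟩, hWH hmgW⟩
  have hMQ : M ≤ normalizer ((P ⊓ H : Subgroup G) : Set G) :=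
    sup_le (le_normalizer.trans (normalizer_le_normalizer_inf_of_normal hH)) hWQ
  exact (mem_normalizer_iff.mp (hMQ m.2) g).mpr hmg

end Restriction

section Transport

variable {G : Type*} [Group G] {Q H : Subgroup G}

theorem centralizer_subgroupOf_s16 (hQ : Q ≤ H) :
    centralizer ((Q.subgroupOf H : Subgroup H) : Set H) =
      (centralizer (Q : Set G)).subgroupOf H := by
  ext g
  simp only [mem_subgroupOf, mem_centralizer_iff, SetLike.mem_coe]
  constructor
  · intro hg q hq
    exact congrArg Subtype.val (hg ⟨q, hQ hq⟩ hq)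
  · intro hg h hh
    exact Subtype.ext (hg h (mem_subgroupOf.mp hh))

theorem sup_centralizer_subgroupOf_s16 (hQ : Q ≤ H) :
    Q.subgroupOf H ⊔ centralizer ((Q.subgroupOf H : Subgroup H) : Set H) =
      (Q ⊔ centralizer (Q : Set G) ⊓ H).subgroupOf H := by
  rw [centralizer_subgroupOf_s16 hQ, subgroupOf_sup hQ inf_le_right, inf_subgroupOf_right]

theorem map_conjNormal_subgroupOf [H.Normal] {n : G} (hn : n ∈ normalizer (Q : Set G)) :
    (Q.subgroupOf H).map (MulAut.conjNormal n).toMonoidHom = Q.subgroupOf H := by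
  ext h
  rw [mem_map_equiv, mem_subgroupOf, mem_subgroupOf, MulAut.conjNormal_symm_apply]
  exact (mem_normalizer_iff''.mp hn h).symm

end Transport

namespace OutG

variable (p : ℕ) {X : Type*} [Group X] (R : Subgroup X)

def pCorePreimage : Subgroup X :=
  ((pCore p (OutG R)).comap (mk R)).map (normalizer (R : Set X)).subtype

variable {p R}

theorem map_pCorePreimage_le [Fact p.Prime] [Finite X] {σ : MulAut X}
    (hσ : R.map σ.toMonoidHom = R) :
    (pCorePreimage p R).map σ.toMonoidHom ≤ pCorePreimage p R := by
  rintro _ ⟨_, ⟨x, hx, rfl⟩, rfl⟩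
  have hσx : σ x ∈ normalizer (R : Set X) :=
    (map_normalizer_of_map_eq hσ).le (mem_map_of_mem _ x.2)
  exact ⟨⟨σ x, hσx⟩, mk_apply_mem_pCore hσ hx hσx, rfl⟩

theorem exists_pow_pow_mem_of_mem_pCorePreimage [Fact p.Prime] [Finite X] {x : X}
    (hx : x ∈ pCorePreimage p R) : ∃ m, x ^ p ^ m ∈ R ⊔ centralizer (R : Set X) := by
  obtain ⟨y, hy, rfl⟩ := hx
  obtain ⟨m, hm⟩ := isPGroup_pCore.exists_pow_pow_eq_one_of_mem (mem_comap.mp hy)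
  rw [← map_pow, mk_eq_one_iff] at hm
  exact ⟨m, hm⟩

theorem pCore_eq_bot_of_forall [Fact p.Prime] [Finite X]
    (h : ∀ x ∈ pCorePreimage p R, (∃ n, x ^ p ^ n = 1) → x ∈ R) : pCore p (OutG R) = ⊥ := by
  refine eq_bot_iff.mpr fun k hk => ?_
  obtain ⟨x, rfl⟩ := mk_surjective R k
  obtain ⟨e, he⟩ := isPGroup_pCore.exists_pow_pow_eq_one_of_mem hk
  obtain ⟨N, ⟨s, hs⟩, hN⟩ := exists_pow_map_eq_of_pow_pow_eq_one (mk R) x he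
  rw [mem_bot, ← hN, mk_eq_one_iff]
  refine mem_sup_left (h _ ⟨x ^ N, ?_, rfl⟩ ⟨s, congrArg Subtype.val hs⟩)
  show mk R (x ^ N) ∈ pCore p (OutG R)
  rwa [hN]

end OutG

section Main

variable {p : ℕ} {G : Type*} [Group G] [Finite G] [Fact p.Prime] {P H : Subgroup G}

theorem IsPCentric.inf_subgroupOf (hc : IsPCentric p P) (hH : H.Normal) (hP : IsPGroup p P)
    (hr : IsFpRadical p P) : IsPCentric p ((P ⊓ H).subgroupOf H) := by
  intro g hgC ⟨n, hn⟩
  rw [centralizer_subgroupOf_s16 inf_le_right, mem_subgroupOf] at hgC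
  refine mem_subgroupOf.mpr (hr.mem_inf_of_pow_pow_eq_one hH hP hc
    (sup_le inf_le_right inf_le_right)
    (sup_le le_normalizer (inf_le_left.trans (centralizer_le_normalizer _)))
    ((normalizer_le_normalizer_inf_of_normal hH).trans
      (normalizer_le_normalizer_sup_centralizer_inf hH))
    (fun w hw => ⟨0, by simpa using hw⟩) (mem_sup_right ⟨hgC, g.2⟩)
    ⟨n, congrArg Subtype.val hn⟩)

theorem IsFpRadical.inf_subgroupOf (hr : IsFpRadical p P) (hH : H.Normal) (hP : IsPGroup p P)
    (hc : IsPCentric p P) : IsFpRadical p ((P ⊓ H).subgroupOf H) := by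
  set R := (P ⊓ H).subgroupOf H
  intro K hK hKp
  suffices pCore p (OutG R) = ⊥ from le_bot_iff.mp (this ▸ le_pCore hK hKp)
  refine OutG.pCore_eq_bot_of_forall fun x hx ⟨e, he⟩ => mem_subgroupOf.mpr ?_
  refine hr.mem_inf_of_pow_pow_eq_one hH hP hc (W := (OutG.pCorePreimage p R).map H.subtype)
    (map_subtype_le _) ?_ ?_ ?_ ⟨x, hx, rfl⟩ ⟨e, congrArg Subtype.val he⟩
  · rintro _ ⟨y, ⟨z, -, rfl⟩, rfl⟩
    exact mem_subgroupOf.mp ((subgroupOf_normalizer_eq inf_le_right).ge z.2)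
  · refine le_normalizer_iff.mpr fun n hn _ ⟨y, hy, hyg⟩ => ?_
    have := hH
    have hσ := map_conjNormal_subgroupOf (H := H) (normalizer_le_normalizer_inf_of_normal hH hn)
    exact ⟨_, OutG.map_pCorePreimage_le hσ ⟨y, hy, rfl⟩, hyg ▸ MulAut.conjNormal_apply n y⟩
  · rintro _ ⟨y, hy, rfl⟩
    obtain ⟨m, hm⟩ := OutG.exists_pow_pow_mem_of_mem_pCorePreimage hy
    rw [sup_centralizer_subgroupOf_s16 inf_le_right, mem_subgroupOf] at hm
    exact ⟨m, hm⟩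

end Main

theorem stmt_16_general (p : ℕ) (hp : p.Prime) {G : Type*} [Group G] [Finite G]
    (H : Subgroup G) (hH : H.Normal)
    (P : Subgroup G) (hP : IsPGroup p P) (hc : IsPCentric p P) (hr : IsFpRadical p P) :
    IsPCentric p ((P ⊓ H).subgroupOf H) ∧ IsFpRadical p ((P ⊓ H).subgroupOf H) := by
  have := Fact.mk hp
  exact ⟨hc.inf_subgroupOf hH hP hr, hr.inf_subgroupOf hH hP hc⟩

theorem stmt_16 (p : ℕ) (hp : p.Prime) {G : Type*} [Group G] [Finite G]
    (H : Subgroup G) (hH : H.Normal) (hidx : ∃ k : ℕ, H.index = p ^ k)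
    (P : Subgroup G) (hP : IsPGroup p P) (hc : IsPCentric p P) (hr : IsFpRadical p P) :
    IsPCentric p ((P ⊓ H).subgroupOf H) ∧ IsFpRadical p ((P ⊓ H).subgroupOf H) :=
  stmt_16_general p hp H hH P hP hc hr
end

section
/- Let p be a prime, G a finite group, and Q a normal p-subgroup of G contained in the center Z(G). If a p-subgroup P ≤ G is p-centric in G and F_p(G)-radical, then Q ≤ P, and the image P/Q of P in the quotient group G/Q is p-centric in G/Q and F_p(G/Q)-radical. -/
open Subgroup
open scoped commutatorElement Pointwise

theorem Commute.exists_mul_pow_pow_eq_one {M : Type*} [Monoid M] {p : ℕ} {a b : M}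
    (h : Commute a b) (ha : ∃ m, a ^ p ^ m = 1) (hb : ∃ n, b ^ p ^ n = 1) :
    ∃ k, (a * b) ^ p ^ k = 1 := by
  obtain ⟨m, hm⟩ := ha
  obtain ⟨n, hn⟩ := hb
  refine ⟨m + n, ?_⟩
  rw [h.mul_pow, pow_add, pow_mul, hm, one_pow, one_mul, mul_comm, pow_mul, hn, one_pow]

section

variable {G H : Type*} [Group G] [Group H] {p : ℕ}

theorem MonoidHom.exists_pow_pow_eq_one_of_map (f : G →* H) (hker : IsPGroup p f.ker) {g : G}
    (h : ∃ n, f g ^ p ^ n = 1) : ∃ n, g ^ p ^ n = 1 := by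
  obtain ⟨n, hn⟩ := h
  obtain ⟨m, hm⟩ := hker ⟨g ^ p ^ n, by rwa [MonoidHom.mem_ker, map_pow]⟩
  refine ⟨n + m, ?_⟩
  rw [pow_add, pow_mul]
  exact congrArg Subtype.val hm

theorem Subgroup.le_normalizer_centralizer_s18 (P : Subgroup G) :
    P ≤ normalizer (centralizer (P : Set G) : Set G) := by
  have hconj := (normal_subgroupOf_iff (centralizer_le_normalizer (P : Set G))).mp inferInstance
  intro y hy c
  exact ⟨fun hc ↦ hconj c y hc (le_normalizer hy),
    fun hc ↦ by simpa [mul_assoc] using hconj _ y⁻¹ hc (inv_mem (le_normalizer hy))⟩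

theorem IsPCentric.le_of_le_center {P Q : Subgroup G} (hc : IsPCentric p P)
    (hQp : IsPGroup p Q) (hQZ : Q ≤ center G) : Q ≤ P := fun q hq ↦
  hc q (center_le_centralizer _ (hQZ hq))
    (let ⟨n, hn⟩ := hQp ⟨q, hq⟩; ⟨n, congrArg Subtype.val hn⟩)

def normalizerMap (f : G →* H) (P : Subgroup G) :
    normalizer (P : Set G) →* normalizer (P.map f : Set H) :=
  (f.comp (normalizer (P : Set G)).subtype).codRestrict _
    fun n ↦ le_normalizer_map f (mem_map_of_mem f n.2)

theorem normalizerMap_surjective {f : G →* H} (hf : Function.Surjective f) {P : Subgroup G}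
    (hkerP : f.ker ≤ P) : Function.Surjective (normalizerMap f P) := by
  rintro ⟨n, hn⟩
  obtain ⟨g, rfl⟩ := hf n
  have hg : g ∈ normalizer (P : Set G) := by
    rw [← comap_map_eq_self hkerP, ← comap_normalizer_eq_of_surjective _ hf]
    exact hn
  exact ⟨⟨g, hg⟩, rfl⟩

theorem isFpRadical_iff {P : Subgroup G} : IsFpRadical p P ↔
    ∀ K : Subgroup (normalizer (P : Set G) ⧸ outKer P), K.Normal → IsPGroup p K → K = ⊥ :=
  Iff.rfl

variable {f : G →* H} {P : Subgroup G}

theorem mem_comap_centralizer_map_iff {g : G} :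
    g ∈ (centralizer (P.map f : Set H)).comap f ↔ ∀ x ∈ P, ⁅g, x⁆ ∈ f.ker := by
  simp [mem_centralizer_iff_commutator_eq_one', map_commutatorElement]

theorem centralizer_le_comap_centralizer_map :
    centralizer (P : Set G) ≤ (centralizer (P.map f : Set H)).comap f := by
  rw [← map_le_iff_le_comap, coe_map]
  exact map_centralizer_le_centralizer_image _ f

theorem comap_centralizer_map_le_normalizer (hkerP : f.ker ≤ P) :
    (centralizer (P.map f : Set H)).comap f ≤ normalizer (P : Set G) := by
  conv_rhs => rw [← comap_map_eq_self hkerP]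
  exact (comap_mono (centralizer_le_normalizer _)).trans (le_normalizer_comap f)

theorem pow_mem_centralizer_of_mem_comap_centralizer_map (hZ : f.ker ≤ center G) {n : ℕ}
    (hexp : ∀ q ∈ f.ker, q ^ n = 1) {g : G} (hg : g ∈ (centralizer (P.map f : Set H)).comap f) :
    g ^ n ∈ centralizer (P : Set G) := by
  refine mem_centralizer_iff.mpr fun x hx ↦ ?_
  set q := ⁅g, x⁆
  have hq : q ∈ f.ker := mem_comap_centralizer_map_iff.mp hg x hx
  have hgx : g * x = q * x * g := by simp [q, commutatorElement_def, mul_assoc]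
  have hpow : ∀ k : ℕ, g ^ k * x = q ^ k * x * g ^ k := by
    intro k
    induction k with
    | zero => simp
    | succ k ih =>
      have hcomm : g * q ^ k = q ^ k * g := mem_center_iff.mp (hZ (pow_mem hq k)) g
      calc g ^ (k + 1) * x = g * (g ^ k * x) := by rw [pow_succ', mul_assoc]
        _ = q ^ k * (g * x) * g ^ k := by
          rw [ih, ← mul_assoc, ← mul_assoc, hcomm]; simp only [mul_assoc]
        _ = q ^ (k + 1) * x * g ^ (k + 1) := by
          rw [hgx, pow_succ, pow_succ']; simp only [mul_assoc]
  rw [hpow n, hexp q hq, one_mul]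

theorem IsFpRadical.comap_centralizer_map_le (hr : IsFpRadical p P) (hkerP : f.ker ≤ P)
    (hZ : f.ker ≤ center G) {e : ℕ} (hexp : ∀ q ∈ f.ker, q ^ p ^ e = 1) :
    (centralizer (P.map f : Set H)).comap f ≤ P ⊔ centralizer (P : Set G) := by
  set X := (centralizer (P.map f : Set H)).comap f
  have hXN : (X.subgroupOf (normalizer (P : Set G))).Normal := by
    have hX_eq : X.subgroupOf (normalizer (P : Set G)) =
        ((centralizer (P.map f : Set H)).subgroupOf (normalizer (P.map f : Set H))).comap
          (normalizerMap f P) := by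
      ext; rfl
    rw [hX_eq]
    infer_instance
  -- The image of `X` in `Out_G(P)` is a normal `p`-subgroup, so it vanishes.
  have hbot : (X.subgroupOf (normalizer (P : Set G))).map (QuotientGroup.mk' (outKer P)) = ⊥ := by
    refine isFpRadical_iff.mp hr _ (hXN.map _ (QuotientGroup.mk'_surjective _))
      fun ⟨_, n, hn, hnk⟩ ↦ ⟨e, ?_⟩
    subst hnk
    apply Subtype.ext
    show QuotientGroup.mk' (outKer P) n ^ p ^ e = 1
    rw [← map_pow]
    exact (QuotientGroup.eq_one_iff _).mpr
      (mem_sup_right (pow_mem_centralizer_of_mem_comap_centralizer_map hZ hexp hn))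
  intro g hg
  have hgN := comap_centralizer_map_le_normalizer hkerP hg
  have hgK : (⟨g, hgN⟩ : normalizer (P : Set G)) ∈ (QuotientGroup.mk' (outKer P)).ker :=
    (Subgroup.map_eq_bot_iff _).mp hbot hg
  rwa [QuotientGroup.ker_mk'] at hgK

theorem IsPCentric.map (hf : Function.Surjective f) (hP : IsPGroup p P)
    (hker : IsPGroup p f.ker) (hc : IsPCentric p P)
    (hX : (centralizer (P.map f : Set H)).comap f ≤ P ⊔ centralizer (P : Set G)) :
    IsPCentric p (P.map f) := by
  intro gb hgb hord
  obtain ⟨g, rfl⟩ := hf gb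
  have hg : g ∈ (P : Set G) * (centralizer (P : Set G) : Set G) := by
    rw [← coe_mul_of_left_le_normalizer_right _ _ (le_normalizer_centralizer_s18 P)]
    exact hX hgb
  obtain ⟨y, hy, c, hcC, rfl⟩ := hg
  have hyp : ∃ n, f y⁻¹ ^ p ^ n = 1 :=
    let ⟨n, hn⟩ := hP ⟨y⁻¹, inv_mem hy⟩; ⟨n, by simpa using congrArg (f ∘ Subtype.val) hn⟩
  have hcp : ∃ n, c ^ p ^ n = 1 := by
    refine f.exists_pow_pow_eq_one_of_map hker ?_
    rw [show f c = f y⁻¹ * f (y * c) by simp]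
    exact Commute.exists_mul_pow_pow_eq_one (hgb _ (mem_map_of_mem f (inv_mem hy))) hyp hord
  exact mem_map_of_mem f (mul_mem hy (hc c hcC hcp))

theorem comap_map_sup_centralizer (hf : Function.Surjective f) (hkerP : f.ker ≤ P)
    (hX : (centralizer (P.map f : Set H)).comap f ≤ P ⊔ centralizer (P : Set G)) :
    (P.map f ⊔ centralizer (P.map f : Set H)).comap f = P ⊔ centralizer (P : Set G) := by
  have hsup : P ⊔ (centralizer (P.map f : Set H)).comap f = P ⊔ centralizer (P : Set G) :=
    le_antisymm (sup_le le_sup_left hX) (sup_le_sup_left centralizer_le_comap_centralizer_map _)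
  rw [← map_comap_eq_self_of_surjective hf (centralizer _), ← Subgroup.map_sup,
    comap_map_eq_self (hkerP.trans le_sup_left), hsup]

theorem ker_mk_comp_normalizerMap (hf : Function.Surjective f) (hkerP : f.ker ≤ P)
    (hX : (centralizer (P.map f : Set H)).comap f ≤ P ⊔ centralizer (P : Set G)) :
    ((QuotientGroup.mk' (outKer (P.map f))).comp (normalizerMap f P)).ker = outKer P := by
  ext n
  rw [MonoidHom.mem_ker, MonoidHom.comp_apply, QuotientGroup.mk'_apply, QuotientGroup.eq_one_iff]
  show f n ∈ (P.map f ⊔ centralizer (P.map f : Set H)) ↔ (n : G) ∈ P ⊔ centralizer (P : Set G)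
  rw [← comap_map_sup_centralizer hf hkerP hX]
  rfl

noncomputable def OutG.mulEquivMap (hf : Function.Surjective f) (hkerP : f.ker ≤ P)
    (hX : (centralizer (P.map f : Set H)).comap f ≤ P ⊔ centralizer (P : Set G)) :
    OutG P ≃* OutG (P.map f) :=
  (QuotientGroup.quotientMulEquivOfEq (ker_mk_comp_normalizerMap hf hkerP hX).symm).trans
    (QuotientGroup.quotientKerEquivOfSurjective _
      ((QuotientGroup.mk'_surjective _).comp (normalizerMap_surjective hf hkerP)))

theorem IsFpRadical.of_mulEquiv {P' : Subgroup H} (e : OutG P ≃* OutG P')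
    (hr : IsFpRadical p P) : IsFpRadical p P' := by
  intro K hK hKp
  have hbot := hr (K.comap e.toMonoidHom) (hK.comap _) (hKp.comap_of_injective _ e.injective)
  rw [← map_comap_eq_self_of_surjective (f := e.toMonoidHom) e.surjective K, hbot,
    Subgroup.map_bot]

end

theorem stmt_18_general (p : ℕ) {G : Type*} [Group G] [Finite G]
    (Q : Subgroup G) [hQN : Q.Normal] (hQZ : Q ≤ Subgroup.center G)
    (hQp : IsPGroup p Q)
    (P : Subgroup G) (hP : IsPGroup p P) (hc : IsPCentric p P) (hr : IsFpRadical p P) :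
    Q ≤ P ∧ IsPCentric p (P.map (QuotientGroup.mk' Q)) ∧
      IsFpRadical p (P.map (QuotientGroup.mk' Q)) := by
  have hker := QuotientGroup.ker_mk' Q
  have hQP : Q ≤ P := hc.le_of_le_center hQp hQZ
  obtain ⟨e, hexp⟩ := isPGroup_iff_exists_pow_pow_eq_one.mp hQp
  have hX := hr.comap_centralizer_map_le (hker.trans_le hQP) (hker.trans_le hQZ)
    (e := e) fun q hq ↦ congrArg Subtype.val (hexp ⟨q, hker ▸ hq⟩)
  have hf := QuotientGroup.mk'_surjective Q
  exact ⟨hQP, hc.map hf hP (by rwa [hker]) hX,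
    hr.of_mulEquiv (OutG.mulEquivMap hf (hker.trans_le hQP) hX)⟩

theorem stmt_18 (p : ℕ) (hp : p.Prime) {G : Type*} [Group G] [Finite G]
    (Q : Subgroup G) [hQN : Q.Normal] (hQZ : Q ≤ Subgroup.center G)
    (hQp : IsPGroup p Q)
    (P : Subgroup G) (hP : IsPGroup p P) (hc : IsPCentric p P) (hr : IsFpRadical p P) :
    Q ≤ P ∧ IsPCentric p (P.map (QuotientGroup.mk' Q)) ∧
      IsFpRadical p (P.map (QuotientGroup.mk' Q)) :=
  stmt_18_general p Q (hQN := hQN) hQZ hQp P hP hc hr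
end

section
/- Let p be a prime and let α : G̃ → G be a surjective homomorphism of finite groups whose kernel is contained in the center Z(G̃). If a p-subgroup P ≤ G is p-centric in G and F_p(G)-radical, then the preimage α^{-1}(P) ≤ G̃ is p-centric in G̃ and F_p(G̃)-radical. -/
/-!
Write `P̃ = α⁻¹(P)`. The map `α` restricts to a surjection `N_{G̃}(P̃) → N_G(P)`, and the heart of
the proof is that `P̃ ⬝ C_{G̃}(P̃)` is the full preimage of `P ⬝ C_G(P)`; hence
`Out_{G̃}(P̃) ≅ Out_G(P)` and radicality transfers. For that, let `α g` centralize `P` and split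
`g` into its `p`-part and `p'`-part. The `p`-part lies in `P̃` because `P` is `p`-centric. For
the `p'`-part `h` and `x ∈ P̃`, the commutator `⁅h, x⁆` lies in `ker α`, hence is central, so
`⁅h ^ k, x⁆ = ⁅h, x⁆ ^ k` and likewise for powers of `x`. Its order therefore divides the
`p'`-order of `h` and a power of `p` (as `x ^ p ^ j ∈ ker α` is central): `h` commutes with `x`.
-/

open Subgroup
open scoped commutatorElement

section

variable {G : Type*} [Group G]

lemma commutatorElement_pow_left_of_mem_center {g x : G} (hc : ⁅g, x⁆ ∈ center G) (n : ℕ) :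
    ⁅g ^ n, x⁆ = ⁅g, x⁆ ^ n := by
  induction n with
  | zero => simp
  | succ n ih =>
    rw [pow_succ', commutatorElement_mul_left_eq_conj_mul, ih,
      mem_center_iff.mp (pow_mem hc n) g, mul_inv_cancel_right, pow_succ]

lemma commute_of_commutatorElement_mem_center {g x : G} (hc : ⁅g, x⁆ ∈ center G) {a b : ℕ}
    (hab : a.Coprime b) (hxa : Commute g (x ^ a)) (hgb : g ^ b = 1) : Commute g x := by
  have hc' : ⁅x, g⁆ ∈ center G := by simpa using inv_mem hc
  have ha : ⁅g, x⁆ ^ a = 1 := by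
    rw [← inv_eq_one, ← inv_pow, commutatorElement_inv,
      ← commutatorElement_pow_left_of_mem_center hc', hxa.symm.commutator_eq]
  have hb : ⁅g, x⁆ ^ b = 1 := by
    rw [← commutatorElement_pow_left_of_mem_center hc, hgb, commutatorElement_one_left]
  exact commutatorElement_eq_one_iff_commute.mp ((pow_eq_one_iff_of_coprime hab).mp ⟨ha, hb⟩)

lemma mem_sup_of_pow_mem_of_coprime {H K : Subgroup G} {g : G} {a b : ℕ} (hab : a.Coprime b)
    (ha : g ^ a ∈ H) (hb : g ^ b ∈ K) : g ∈ H ⊔ K := by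
  have hbezout : g = (g ^ a) ^ a.gcdA b * (g ^ b) ^ a.gcdB b := by
    rw [← zpow_natCast, ← zpow_natCast, ← zpow_mul, ← zpow_mul, ← zpow_add,
      ← Nat.gcd_eq_gcd_ab, hab.gcd_eq_one, Nat.cast_one, zpow_one]
  rw [hbezout]
  exact mul_mem (mem_sup_left (zpow_mem ha _)) (mem_sup_right (zpow_mem hb _))

end

section Preimage

variable {G' G : Type*} [Group G'] [Group G] (α : G' →* G) {P : Subgroup G}

lemma map_mem_centralizer_of_mem_centralizer_comap (hsurj : Function.Surjective α) {g : G'}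
    (hg : g ∈ centralizer (P.comap α : Set G')) : α g ∈ centralizer (P : Set G) := by
  have := map_centralizer_le_centralizer_image _ α (mem_map_of_mem α hg)
  rwa [coe_comap, Set.image_preimage_eq _ hsurj] at this

lemma IsPCentric.comap {p : ℕ} (hsurj : Function.Surjective α) (hc : IsPCentric p P) :
    IsPCentric p (P.comap α) := fun g hg ⟨n, hn⟩ ↦
  hc (α g) (map_mem_centralizer_of_mem_centralizer_comap α hsurj hg)
    ⟨n, by rw [← map_pow, hn, map_one]⟩

variable {α}

lemma mem_centralizer_comap_of_pow_eq_one {p : ℕ} (hker : α.ker ≤ center G')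
    (hP : IsPGroup p P) {g : G'} (hg : α g ∈ centralizer (P : Set G)) {m : ℕ} (hm : p.Coprime m)
    (hgm : g ^ m = 1) :
    g ∈ centralizer (P.comap α : Set G') := by
  intro x hx
  obtain ⟨j, hj⟩ := hP ⟨α x, hx⟩
  have hcomm : ⁅g, x⁆ ∈ center G' := hker <| by
    rw [MonoidHom.mem_ker, map_commutatorElement, commutatorElement_eq_one_iff_mul_comm]
    exact (hg (α x) hx).symm
  have hxpow : x ^ p ^ j ∈ center G' := hker <| by
    simpa [MonoidHom.mem_ker] using congrArg Subtype.val hj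
  exact (commute_of_commutatorElement_mem_center hcomm (hm.pow_left j)
    (mem_center_iff.mp hxpow g) hgm).eq.symm

lemma mem_sup_centralizer_comap_of_map_mem_centralizer [Finite G'] {p : ℕ} (hp : p.Prime)
    (hker : α.ker ≤ center G') (hP : IsPGroup p P) (hc : IsPCentric p P) {g : G'}
    (hg : α g ∈ centralizer (P : Set G)) :
    g ∈ P.comap α ⊔ centralizer (P.comap α : Set G') := by
  set n := orderOf g
  have hpm : p.Coprime (ordCompl[p] n) := Nat.coprime_ordCompl hp (orderOf_pos g).ne'
  have hsplit : g ^ (p ^ n.factorization p * ordCompl[p] n) = 1 := by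
    rw [Nat.ordProj_mul_ordCompl_eq_self]
    exact pow_orderOf_eq_one g
  have hgpow (k : ℕ) : α (g ^ k) ∈ centralizer (P : Set G) := map_pow α g k ▸ pow_mem hg k
  refine mem_sup_of_pow_mem_of_coprime (hpm.pow_left (n.factorization p)).symm ?_ ?_
  · refine hc _ (hgpow _) ⟨n.factorization p, ?_⟩
    rw [← map_pow, ← pow_mul, mul_comm, hsplit, map_one]
  · exact mem_centralizer_comap_of_pow_eq_one hker hP (hgpow _) hpm (by rw [← pow_mul, hsplit])

lemma comap_sup_centralizer_eq {p : ℕ} [Finite G'] (hp : p.Prime)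
    (hsurj : Function.Surjective α) (hker : α.ker ≤ center G') (hP : IsPGroup p P)
    (hc : IsPCentric p P) :
    (P ⊔ centralizer (P : Set G)).comap α = P.comap α ⊔ centralizer (P.comap α : Set G') := by
  apply le_antisymm
  · have hle : P ⊔ centralizer (P : Set G) ≤
        (P.comap α ⊔ centralizer (P.comap α : Set G')).map α := by
      refine sup_le ?_ fun y hy ↦ ?_
      · exact (map_comap_eq_self_of_surjective hsurj P).ge.trans (map_mono le_sup_left)
      · obtain ⟨g, rfl⟩ := hsurj y
        exact mem_map_of_mem α
          (mem_sup_centralizer_comap_of_map_mem_centralizer hp hker hP hc hy)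
    have hker' : α.ker ≤ P.comap α ⊔ centralizer (P.comap α : Set G') :=
      (MonoidHom.ker_le_comap α P).trans le_sup_left
    calc (P ⊔ centralizer (P : Set G)).comap α
        ≤ ((P.comap α ⊔ centralizer (P.comap α : Set G')).map α).comap α := comap_mono hle
      _ = P.comap α ⊔ centralizer (P.comap α : Set G') := by
        rw [comap_map_eq, sup_eq_left.mpr hker']
  · exact sup_le (comap_mono le_sup_left) fun g hg ↦
      mem_sup_right (map_mem_centralizer_of_mem_centralizer_comap α hsurj hg)

variable (α)

def normalizerComapHom (hsurj : Function.Surjective α) (P : Subgroup G) :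
    normalizer (P.comap α : Set G') →* normalizer (P : Set G) :=
  (α.comp (normalizer _).subtype).codRestrict _ fun g ↦
    (comap_normalizer_eq_of_surjective P hsurj).ge g.2

lemma normalizerComapHom_surjective (hsurj : Function.Surjective α) (P : Subgroup G) :
    Function.Surjective (normalizerComapHom α hsurj P) := fun y ↦
  let ⟨g, hg⟩ := hsurj y
  ⟨⟨g, (comap_normalizer_eq_of_surjective P hsurj).le
    (hg ▸ y.2 : α g ∈ normalizer (P : Set G))⟩, Subtype.ext hg⟩

variable {α}

lemma ker_mk_comp_normalizerComapHom {p : ℕ} [Finite G'] (hp : p.Prime)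
    (hsurj : Function.Surjective α) (hker : α.ker ≤ center G') (hP : IsPGroup p P)
    (hc : IsPCentric p P) :
    ((QuotientGroup.mk' (outKer P)).comp (normalizerComapHom α hsurj P)).ker =
      outKer (P.comap α) := by
  ext g
  rw [MonoidHom.mem_ker, MonoidHom.comp_apply, QuotientGroup.mk'_apply,
    QuotientGroup.eq_one_iff, outKer, outKer, mem_subgroupOf, mem_subgroupOf,
    ← comap_sup_centralizer_eq hp hsurj hker hP hc]
  rfl

noncomputable def outComapMulEquiv {p : ℕ} [Finite G'] (hp : p.Prime)
    (hsurj : Function.Surjective α) (hker : α.ker ≤ center G') (hP : IsPGroup p P)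
    (hc : IsPCentric p P) : OutG (P.comap α) ≃* OutG P :=
  (QuotientGroup.quotientMulEquivOfEq
      (ker_mk_comp_normalizerComapHom hp hsurj hker hP hc).symm).trans
    (QuotientGroup.quotientKerEquivOfSurjective _
      ((QuotientGroup.mk'_surjective _).comp (normalizerComapHom_surjective α hsurj P)))

end Preimage

lemma IsFpRadical.of_mulEquiv_s19 {p : ℕ} {G' G : Type*} [Group G'] [Group G] {Q : Subgroup G'}
    {P : Subgroup G} (e : OutG Q ≃* OutG P) (hP : IsFpRadical p P) : IsFpRadical p Q :=
  fun K hK hKp ↦ (map_eq_bot_iff_of_injective K e.injective).mp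
    (hP _ (hK.map e.toMonoidHom e.surjective) (hKp.map e.toMonoidHom))

theorem stmt_19_general (p : ℕ) (hp : p.Prime) {G' G : Type*} [Group G'] [Group G]
    [Finite G'] (α : G' →* G) (hsurj : Function.Surjective α)
    (hker : α.ker ≤ Subgroup.center G')
    (P : Subgroup G) (hP : IsPGroup p P) (hc : IsPCentric p P) (hr : IsFpRadical p P) :
    IsPCentric p (P.comap α) ∧ IsFpRadical p (P.comap α) :=
  ⟨hc.comap α hsurj, hr.of_mulEquiv_s19 (outComapMulEquiv hp hsurj hker hP hc)⟩

theorem stmt_19 (p : ℕ) (hp : p.Prime) {G' G : Type*} [Group G'] [Group G]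
    [Finite G'] [Finite G] (α : G' →* G) (hsurj : Function.Surjective α)
    (hker : α.ker ≤ Subgroup.center G')
    (P : Subgroup G) (hP : IsPGroup p P) (hc : IsPCentric p P) (hr : IsFpRadical p P) :
    IsPCentric p (P.comap α) ∧ IsFpRadical p (P.comap α) :=
  stmt_19_general p hp α hsurj hker P hP hc hr
end
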